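/- arXiv:math/0404397 — 5 statements merged into one kernel-verified Lean document; each statement's English description precedes it below -/
import Mathlib

section
/- In a hyperbolic group G, if A and B are quasiconvex subsets, then the product set A·B = {ab : a ∈ A, b ∈ B} is quasiconvex. -/
open Pointwise

variable {G : Type*} [Group G]

/-- Word length of `g` with respect to a (symmetrized) generating set `S`. -/
noncomputable def wordLength (S : Set G) (g : G) : ℕ :=
  sInf {n | ∃ l : List G, (∀ x ∈ l, x ∈ S) ∧ l.length = n ∧ l.prod = g}

/-- Word metric (distance in the Cayley graph). -/
noncomputable def wdist (S : Set G) (g h : G) : ℕ := wordLength S (g⁻¹ * h)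

/-- A discrete geodesic of length `n` in the Cayley graph of `G` w.r.t. `S`. -/
def IsGeodesic (S : Set G) (p : ℕ → G) (n : ℕ) : Prop :=
  ∀ i j : ℕ, i ≤ j → j ≤ n → wdist S (p i) (p j) = j - i

section aux

variable {S : Set G}

lemma exists_word (hSsym : S⁻¹ = S) (hSgen : Subgroup.closure S = ⊤) (g : G) :
    ∃ l : List G, (∀ x ∈ l, x ∈ S) ∧ l.prod = g := by
  have hmem : g ∈ Subgroup.closure S := by rw [hSgen]; exact Subgroup.mem_top g
  induction hmem using Subgroup.closure_induction with
  | mem x hx => exact ⟨[x], by simpa using hx, by simp⟩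
  | one => exact ⟨[], by simp, by simp⟩
  | mul x y _ _ hx hy =>
      obtain ⟨l1, h1, p1⟩ := hx
      obtain ⟨l2, h2, p2⟩ := hy
      refine ⟨l1 ++ l2, ?_, by simp [p1, p2]⟩
      intro z hz
      rcases List.mem_append.mp hz with h | h
      · exact h1 z h
      · exact h2 z h
  | inv x _ hx =>
      obtain ⟨l, hl, pl⟩ := hx
      refine ⟨(l.map fun x => x⁻¹).reverse, ?_, ?_⟩
      · intro z hz
        simp only [List.mem_reverse, List.mem_map] at hz
        obtain ⟨y, hy, rfl⟩ := hz
        rw [← hSsym]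
        simpa using hl y hy
      · rw [← pl]; exact (List.prod_inv_reverse l).symm

lemma wordLength_spec (hSsym : S⁻¹ = S) (hSgen : Subgroup.closure S = ⊤) (g : G) :
    ∃ l : List G, (∀ x ∈ l, x ∈ S) ∧ l.length = wordLength S g ∧ l.prod = g := by
  have hne : {n | ∃ l : List G, (∀ x ∈ l, x ∈ S) ∧ l.length = n ∧ l.prod = g}.Nonempty := by
    obtain ⟨l, hl, pl⟩ := exists_word hSsym hSgen g
    exact ⟨l.length, l, hl, rfl, pl⟩
  exact Nat.sInf_mem hne

lemma wordLength_le {g : G} {l : List G} (hl : ∀ x ∈ l, x ∈ S) (hp : l.prod = g) :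
    wordLength S g ≤ l.length :=
  Nat.sInf_le ⟨l, hl, rfl, hp⟩

lemma wordLength_mul_le (hSsym : S⁻¹ = S) (hSgen : Subgroup.closure S = ⊤) (g h : G) :
    wordLength S (g * h) ≤ wordLength S g + wordLength S h := by
  obtain ⟨l1, h1, len1, p1⟩ := wordLength_spec hSsym hSgen g
  obtain ⟨l2, h2, len2, p2⟩ := wordLength_spec hSsym hSgen h
  have : wordLength S (g * h) ≤ (l1 ++ l2).length := by
    refine wordLength_le ?_ (by simp [p1, p2])
    intro z hz
    rcases List.mem_append.mp hz with hh | hh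
    · exact h1 z hh
    · exact h2 z hh
  simpa [len1, len2] using this

lemma wordLength_inv_le (hSsym : S⁻¹ = S) (hSgen : Subgroup.closure S = ⊤) (g : G) :
    wordLength S g⁻¹ ≤ wordLength S g := by
  obtain ⟨l, hl, len, pl⟩ := wordLength_spec hSsym hSgen g
  have := wordLength_le (S := S) (g := g⁻¹) (l := (l.map fun x => x⁻¹).reverse) ?_ ?_
  · simpa [len] using this
  · intro z hz
    simp only [List.mem_reverse, List.mem_map] at hz
    obtain ⟨y, hy, rfl⟩ := hz
    rw [← hSsym]
    simpa using hl y hy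
  · rw [← pl]; exact (List.prod_inv_reverse l).symm

lemma wordLength_inv (hSsym : S⁻¹ = S) (hSgen : Subgroup.closure S = ⊤) (g : G) :
    wordLength S g⁻¹ = wordLength S g :=
  le_antisymm (wordLength_inv_le hSsym hSgen g)
    (by simpa using wordLength_inv_le hSsym hSgen g⁻¹)

lemma wdist_triangle (hSsym : S⁻¹ = S) (hSgen : Subgroup.closure S = ⊤) (a b c : G) :
    wdist S a c ≤ wdist S a b + wdist S b c := by
  have : a⁻¹ * c = (a⁻¹ * b) * (b⁻¹ * c) := by group
  unfold wdist
  rw [this]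
  exact wordLength_mul_le hSsym hSgen _ _

lemma wdist_symm (hSsym : S⁻¹ = S) (hSgen : Subgroup.closure S = ⊤) (a b : G) :
    wdist S a b = wdist S b a := by
  unfold wdist
  rw [← wordLength_inv hSsym hSgen (b⁻¹ * a)]
  congr 1
  group

lemma wdist_mul_left (k a b : G) : wdist S (k * a) (k * b) = wdist S a b := by
  unfold wdist
  congr 1
  group

lemma wdist_mul_right_self (a b : G) : wdist S a (a * b) = wordLength S b := by
  unfold wdist
  congr 1
  group

lemma IsGeodesic.translate {p : ℕ → G} {n : ℕ} (hp : IsGeodesic S p n) (k : G) :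
    IsGeodesic S (fun i => k * p i) n := by
  intro i j hij hjn
  rw [wdist_mul_left]
  exact hp i j hij hjn

lemma exists_geodesic (hSsym : S⁻¹ = S) (hSgen : Subgroup.closure S = ⊤) (g h : G) :
    ∃ p : ℕ → G, IsGeodesic S p (wdist S g h) ∧ p 0 = g ∧ p (wdist S g h) = h := by
  obtain ⟨l, hl, len, pl⟩ := wordLength_spec hSsym hSgen (g⁻¹ * h)
  have hlen : l.length = wdist S g h := len
  refine ⟨fun i => g * (l.take i).prod, ?_, by simp, ?_⟩
  · intro i j hij hjn
    rw [wdist_mul_left]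
    have hj : j = i + (j - i) := by omega
    have htake : l.take j = l.take i ++ (l.drop i).take (j - i) := by
      nth_rewrite 1 [hj]
      rw [List.take_add]
    set m : List G := (l.drop i).take (j - i) with hm
    have hval : wdist S (l.take i).prod (l.take j).prod = wordLength S m.prod := by
      unfold wdist
      congr 1
      rw [htake, List.prod_append]
      group
    have hmlen : m.length = j - i := by
      rw [hm, List.length_take, List.length_drop]
      omega
    have hmmem : ∀ x ∈ m, x ∈ S := fun x hx =>
      hl x (List.mem_of_mem_drop (List.mem_of_mem_take hx))
    -- upper bound
    have hub : wordLength S m.prod ≤ j - i := by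
      have := wordLength_le (S := S) hmmem rfl
      omega
    -- lower bound
    have hlb : wdist S g h ≤ i + wordLength S m.prod + (l.length - j) := by
      have hsplit : g⁻¹ * h = (l.take i).prod * m.prod * (l.drop j).prod := by
        rw [← pl, ← List.prod_take_mul_prod_drop l j, htake, List.prod_append]
      have h1 : wordLength S (g⁻¹ * h) ≤
          wordLength S ((l.take i).prod * m.prod) + wordLength S (l.drop j).prod := by
        rw [hsplit]; exact wordLength_mul_le hSsym hSgen _ _
      have h2 : wordLength S ((l.take i).prod * m.prod) ≤
          wordLength S (l.take i).prod + wordLength S m.prod :=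
        wordLength_mul_le hSsym hSgen _ _
      have h3 : wordLength S (l.take i).prod ≤ i := by
        have := wordLength_le (S := S) (l := l.take i)
          (fun x hx => hl x (List.mem_of_mem_take hx)) rfl
        have : wordLength S (l.take i).prod ≤ (l.take i).length := this
        rw [List.length_take] at this
        omega
      have h4 : wordLength S (l.drop j).prod ≤ l.length - j := by
        have := wordLength_le (S := S) (l := l.drop j)
          (fun x hx => hl x (List.mem_of_mem_drop hx)) rfl
        rwa [List.length_drop] at this
      unfold wdist
      omega
    rw [hval]
    omega
  · show g * (l.take (wdist S g h)).prod = h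
    rw [← hlen, List.take_length, pl]
    group

end aux
/-- `Q` is `ε`-quasiconvex: every geodesic between two elements of `Q`
lies in the closed `ε`-neighborhood of `Q`. -/
def IsQuasiconvex (S : Set G) (ε : ℝ) (Q : Set G) : Prop :=
  ∀ (p : ℕ → G) (n : ℕ), IsGeodesic S p n → p 0 ∈ Q → p n ∈ Q →
    ∀ i ≤ n, ∃ q ∈ Q, (wdist S (p i) q : ℝ) ≤ ε

/-- All geodesic triangles in the Cayley graph are `δ`-slim. -/
def SlimTriangles (S : Set G) (δ : ℝ) : Prop :=
  ∀ (p q r : ℕ → G) (np nq nr : ℕ),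
    IsGeodesic S p np → IsGeodesic S q nq → IsGeodesic S r nr →
    p np = q 0 → r 0 = p 0 → r nr = q nq →
    ∀ i ≤ nr, ∃ j : ℕ, (j ≤ np ∧ (wdist S (r i) (p j) : ℝ) ≤ δ) ∨
                       (j ≤ nq ∧ (wdist S (r i) (q j) : ℝ) ≤ δ)

/-- In a hyperbolic group, the product of two quasiconvex subsets is quasiconvex. -/
theorem product_quasiconvex (S : Set G) (hSfin : S.Finite) (hSsym : S⁻¹ = S)
    (hSgen : Subgroup.closure S = ⊤) (δ : ℝ) (hδ : 0 ≤ δ) (hslim : SlimTriangles S δ)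
    (A B : Set G) (hA : ∃ ε : ℝ, 0 ≤ ε ∧ IsQuasiconvex S ε A)
    (hB : ∃ ε : ℝ, 0 ≤ ε ∧ IsQuasiconvex S ε B) :
    ∃ ε : ℝ, 0 ≤ ε ∧ IsQuasiconvex S ε (A * B) := by
  obtain ⟨εA, hεA0, hQA⟩ := hA
  obtain ⟨εB, hεB0, hQB⟩ := hB
  rcases B.eq_empty_or_nonempty with hBe | ⟨b0, hb0⟩
  · refine ⟨0, le_refl 0, ?_⟩
    intro p n _ h0 _ i _
    rw [hBe, Set.mul_empty] at h0
    exact absurd h0 (Set.notMem_empty _)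
  have hc0 : (0 : ℝ) ≤ (wordLength S b0 : ℝ) := Nat.cast_nonneg _
  set c : ℝ := (wordLength S b0 : ℝ) with hcdef
  have tri : ∀ a b c' : G, (wdist S a c' : ℝ) ≤ (wdist S a b : ℝ) + (wdist S b c' : ℝ) := by
    intro a b c'
    exact_mod_cast wdist_triangle hSsym hSgen a b c'
  refine ⟨3 * δ + εA + εB + c, by linarith, ?_⟩
  intro γ n hγ h0 hn i hin
  obtain ⟨a1, ha1, b1, hb1, hu⟩ := Set.mem_mul.mp h0
  obtain ⟨a2, ha2, b2, hb2, hv⟩ := Set.mem_mul.mp hn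
  obtain ⟨P1, hP1, hP10, hP1e⟩ := exists_geodesic hSsym hSgen (γ 0) a1
  obtain ⟨Q1, hQ1, hQ10, hQ1e⟩ := exists_geodesic hSsym hSgen a1 (γ n)
  have T1 := hslim P1 Q1 γ _ _ n hP1 hQ1 hγ (by rw [hP1e, hQ10]) hP10.symm (by rw [hQ1e])
  obtain ⟨j, hj⟩ := T1 i hin
  rcases hj with ⟨hjle, hjd⟩ | ⟨hjle, hjd⟩
  · -- near side [γ 0, a1] : translate by a1⁻¹, triangle with vertices b1, b0, 1
    obtain ⟨P4, hP4, hP40, hP4e⟩ := exists_geodesic hSsym hSgen b1 b0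
    obtain ⟨Q4, hQ4, hQ40, hQ4e⟩ := exists_geodesic hSsym hSgen b0 1
    have T4 := hslim P4 Q4 (fun k => a1⁻¹ * P1 k) _ _ _ hP4 hQ4 (hP1.translate a1⁻¹)
      (by rw [hP4e, hQ40])
      (by show a1⁻¹ * P1 0 = P4 0; rw [hP10, ← hu, hP40]; group)
      (by show a1⁻¹ * P1 _ = Q4 _; rw [hP1e, hQ4e]; group)
    obtain ⟨m, hm⟩ := T4 j hjle
    rcases hm with ⟨hmle, hmd⟩ | ⟨hmle, hmd⟩
    · -- near [b1, b0] : use quasiconvexity of B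
      obtain ⟨b, hbB, hbd⟩ := hQB P4 _ hP4 (by rw [hP40]; exact hb1) (by rw [hP4e]; exact hb0)
        m hmle
      refine ⟨a1 * b, Set.mul_mem_mul ha1 hbB, ?_⟩
      have hmd' : (wdist S (a1⁻¹ * P1 j) (P4 m) : ℝ) ≤ δ := hmd
      have e1 : wdist S (a1⁻¹ * P1 j) b = wdist S (P1 j) (a1 * b) := by
        rw [← wdist_mul_left (S := S) a1⁻¹ (P1 j) (a1 * b)]
        congr 1
        group
      have t1 := tri (γ i) (P1 j) (a1 * b)
      have t2 : (wdist S (P1 j) (a1 * b) : ℝ) ≤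
          (wdist S (a1⁻¹ * P1 j) (P4 m) : ℝ) + (wdist S (P4 m) b : ℝ) := by
        rw [← e1]; exact tri _ _ _
      linarith
    · -- near [b0, 1] : point close to b0 itself
      refine ⟨a1 * b0, Set.mul_mem_mul ha1 hb0, ?_⟩
      have hmd' : (wdist S (a1⁻¹ * P1 j) (Q4 m) : ℝ) ≤ δ := hmd
      have hq4 : wdist S (Q4 m) b0 ≤ wordLength S b0 := by
        have h1 : wdist S (Q4 0) (Q4 m) = m - 0 := hQ4 0 m (Nat.zero_le m) hmle
        have h2 : wdist S (Q4 m) b0 = wdist S (Q4 0) (Q4 m) := by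
          rw [wdist_symm hSsym hSgen, hQ40]
        have h3 : wdist S b0 1 = wordLength S b0 := by
          show wordLength S (b0⁻¹ * 1) = wordLength S b0
          rw [mul_one]
          exact wordLength_inv hSsym hSgen b0
        omega
      have hq4' : (wdist S (Q4 m) b0 : ℝ) ≤ c := by rw [hcdef]; exact_mod_cast hq4
      have e1 : wdist S (a1⁻¹ * P1 j) b0 = wdist S (P1 j) (a1 * b0) := by
        rw [← wdist_mul_left (S := S) a1⁻¹ (P1 j) (a1 * b0)]
        congr 1
        group
      have t1 := tri (γ i) (P1 j) (a1 * b0)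
      have t2 : (wdist S (P1 j) (a1 * b0) : ℝ) ≤
          (wdist S (a1⁻¹ * P1 j) (Q4 m) : ℝ) + (wdist S (Q4 m) b0 : ℝ) := by
        rw [← e1]; exact tri _ _ _
      linarith
  · -- near side [a1, γ n] : second triangle with vertices a1, a2, γ n
    obtain ⟨P2, hP2, hP20, hP2e⟩ := exists_geodesic hSsym hSgen a1 a2
    obtain ⟨Q2, hQ2, hQ20, hQ2e⟩ := exists_geodesic hSsym hSgen a2 (γ n)
    have T2 := hslim P2 Q2 Q1 _ _ _ hP2 hQ2 hQ1 (by rw [hP2e, hQ20]) (by rw [hQ10, hP20])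
      (by rw [hQ1e, hQ2e])
    obtain ⟨k, hk⟩ := T2 j hjle
    rcases hk with ⟨hkle, hkd⟩ | ⟨hkle, hkd⟩
    · -- near [a1, a2] : use quasiconvexity of A, then shift into A·B by b0
      obtain ⟨a, haA, had⟩ := hQA P2 _ hP2 (by rw [hP20]; exact ha1) (by rw [hP2e]; exact ha2)
        k hkle
      refine ⟨a * b0, Set.mul_mem_mul haA hb0, ?_⟩
      have hab : (wdist S a (a * b0) : ℝ) = c := by
        rw [wdist_mul_right_self]
      have t1 := tri (γ i) (Q1 j) (a * b0)
      have t2 := tri (Q1 j) (P2 k) (a * b0)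
      have t3 := tri (P2 k) a (a * b0)
      linarith
    · -- near [a2, γ n] : translate by a2⁻¹, triangle with vertices 1, b0, b2
      obtain ⟨P3, hP3, hP30, hP3e⟩ := exists_geodesic hSsym hSgen 1 b0
      obtain ⟨Q3, hQ3, hQ30, hQ3e⟩ := exists_geodesic hSsym hSgen b0 b2
      have T3 := hslim P3 Q3 (fun t => a2⁻¹ * Q2 t) _ _ _ hP3 hQ3 (hQ2.translate a2⁻¹)
        (by rw [hP3e, hQ30])
        (by show a2⁻¹ * Q2 0 = P3 0; rw [hQ20, hP30]; group)
        (by show a2⁻¹ * Q2 _ = Q3 _; rw [hQ2e, hQ3e, ← hv]; group)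
      obtain ⟨m, hm⟩ := T3 k hkle
      rcases hm with ⟨hmle, hmd⟩ | ⟨hmle, hmd⟩
      · -- near [1, b0] : close to b0
        refine ⟨a2 * b0, Set.mul_mem_mul ha2 hb0, ?_⟩
        have hmd' : (wdist S (a2⁻¹ * Q2 k) (P3 m) : ℝ) ≤ δ := hmd
        have hp3 : wdist S (P3 m) b0 ≤ wordLength S b0 := by
          have h1 : wdist S (P3 m) (P3 (wdist S 1 b0)) = wdist S 1 b0 - m :=
            hP3 m _ hmle le_rfl
          have h2 : wdist S (1 : G) b0 = wordLength S b0 := by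
            show wordLength S ((1 : G)⁻¹ * b0) = wordLength S b0
            rw [inv_one, one_mul]
          rw [hP3e] at h1
          omega
        have hp3' : (wdist S (P3 m) b0 : ℝ) ≤ c := by rw [hcdef]; exact_mod_cast hp3
        have e1 : wdist S (a2⁻¹ * Q2 k) b0 = wdist S (Q2 k) (a2 * b0) := by
          rw [← wdist_mul_left (S := S) a2⁻¹ (Q2 k) (a2 * b0)]
          congr 1
          group
        have t1 := tri (γ i) (Q1 j) (a2 * b0)
        have t2 := tri (Q1 j) (Q2 k) (a2 * b0)
        have t3 : (wdist S (Q2 k) (a2 * b0) : ℝ) ≤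
            (wdist S (a2⁻¹ * Q2 k) (P3 m) : ℝ) + (wdist S (P3 m) b0 : ℝ) := by
          rw [← e1]; exact tri _ _ _
        linarith
      · -- near [b0, b2] : use quasiconvexity of B
        obtain ⟨b, hbB, hbd⟩ := hQB Q3 _ hQ3 (by rw [hQ30]; exact hb0) (by rw [hQ3e]; exact hb2)
          m hmle
        refine ⟨a2 * b, Set.mul_mem_mul ha2 hbB, ?_⟩
        have hmd' : (wdist S (a2⁻¹ * Q2 k) (Q3 m) : ℝ) ≤ δ := hmd
        have e1 : wdist S (a2⁻¹ * Q2 k) b = wdist S (Q2 k) (a2 * b) := by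
          rw [← wdist_mul_left (S := S) a2⁻¹ (Q2 k) (a2 * b)]
          congr 1
          group
        have t1 := tri (γ i) (Q1 j) (a2 * b)
        have t2 := tri (Q1 j) (Q2 k) (a2 * b)
        have t3 : (wdist S (Q2 k) (a2 * b) : ℝ) ≤
            (wdist S (a2⁻¹ * Q2 k) (Q3 m) : ℝ) + (wdist S (Q3 m) b : ℝ) := by
          rw [← e1]; exact tri _ _ _
        linarith
end

section
/- Let H be a finitely generated undistorted subgroup of a hyperbolic group G. Then H is quasiconvex in G. -/
open Pointwise

variable {G : Type*} [Group G]

namespace QCAux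

lemma wordLength_le_length (S : Set G) (l : List G) (hl : ∀ x ∈ l, x ∈ S) :
    wordLength S l.prod ≤ l.length := Nat.sInf_le ⟨l, hl, rfl, rfl⟩

lemma exists_word (S : Set G) (hSsym : S⁻¹ = S) {g : G} (hg : g ∈ Subgroup.closure S) :
    ∃ l : List G, (∀ x ∈ l, x ∈ S) ∧ l.prod = g := by
  have hg' : g ∈ Submonoid.closure (S ∪ S⁻¹) := by
    rw [← Subgroup.closure_toSubmonoid]; exact hg
  obtain ⟨l, hl, hp⟩ := Submonoid.exists_list_of_mem_closure hg'
  exact ⟨l, fun x hx => by rcases hl x hx with h | h; · exact h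
                           · rw [← hSsym]; exact h, hp⟩

lemma exists_min_word (S : Set G) (hSsym : S⁻¹ = S) {g : G} (hg : g ∈ Subgroup.closure S) :
    ∃ l : List G, (∀ x ∈ l, x ∈ S) ∧ l.length = wordLength S g ∧ l.prod = g := by
  obtain ⟨l, hl, hp⟩ := exists_word S hSsym hg
  have : wordLength S g ∈ {n | ∃ l : List G, (∀ x ∈ l, x ∈ S) ∧ l.length = n ∧ l.prod = g} :=
    Nat.sInf_mem ⟨l.length, l, hl, rfl, hp⟩
  exact this

lemma wordLength_one (S : Set G) : wordLength S 1 = 0 :=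
  Nat.le_zero.mp (by simpa using wordLength_le_length S [] (by simp))

lemma wordLength_mul_le (S : Set G) (hSsym : S⁻¹ = S) {g h : G}
    (hg : g ∈ Subgroup.closure S) (hh : h ∈ Subgroup.closure S) :
    wordLength S (g * h) ≤ wordLength S g + wordLength S h := by
  obtain ⟨l1, hl1, hlen1, hp1⟩ := exists_min_word S hSsym hg
  obtain ⟨l2, hl2, hlen2, hp2⟩ := exists_min_word S hSsym hh
  have := wordLength_le_length S (l1 ++ l2) (by
    intro x hx; rcases List.mem_append.mp hx with h | h
    · exact hl1 x h
    · exact hl2 x h)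
  simpa [hp1, hp2, hlen1, hlen2] using this

lemma wordSet_inv_subset (S : Set G) (hSsym : S⁻¹ = S) (g : G) :
    {n | ∃ l : List G, (∀ x ∈ l, x ∈ S) ∧ l.length = n ∧ l.prod = g} ⊆
    {n | ∃ l : List G, (∀ x ∈ l, x ∈ S) ∧ l.length = n ∧ l.prod = g⁻¹} := by
  rintro n ⟨l, hl, hlen, hp⟩
  refine ⟨(l.map (·⁻¹)).reverse, ?_, by simp [hlen], ?_⟩
  · intro x hx
    simp only [List.mem_reverse, List.mem_map] at hx
    obtain ⟨y, hy, rfl⟩ := hx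
    rw [← hSsym]; simpa using hl y hy
  · rw [← List.prod_inv_reverse, hp]

lemma wordLength_inv (S : Set G) (hSsym : S⁻¹ = S) (g : G) :
    wordLength S g⁻¹ = wordLength S g := by
  unfold wordLength
  have h1 := wordSet_inv_subset S hSsym g
  have h2 := wordSet_inv_subset S hSsym g⁻¹
  rw [inv_inv] at h2
  rw [Set.Subset.antisymm h2 h1]


lemma wdist_self (S : Set G) (a : G) : wdist S a a = 0 := by
  simp [wdist, wordLength_one]

lemma wdist_symm (S : Set G) (hSsym : S⁻¹ = S) (a b : G) :
    wdist S a b = wdist S b a := by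
  unfold wdist
  rw [← wordLength_inv S hSsym (b⁻¹ * a)]
  simp [mul_inv_rev]

lemma wdist_triangle (S : Set G) (hSsym : S⁻¹ = S) {a b c : G}
    (h1 : a⁻¹ * b ∈ Subgroup.closure S) (h2 : b⁻¹ * c ∈ Subgroup.closure S) :
    wdist S a c ≤ wdist S a b + wdist S b c := by
  have : a⁻¹ * c = (a⁻¹ * b) * (b⁻¹ * c) := by group
  unfold wdist
  rw [this]
  exact wordLength_mul_le S hSsym h1 h2

lemma wdist_triangle' (S : Set G) (hSsym : S⁻¹ = S) (hSgen : Subgroup.closure S = ⊤)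
    (a b c : G) : wdist S a c ≤ wdist S a b + wdist S b c :=
  wdist_triangle S hSsym (hSgen ▸ Subgroup.mem_top _) (hSgen ▸ Subgroup.mem_top _)

/-- Prefix products of a minimal word form a geodesic. -/
lemma prefix_geodesic (S : Set G) (hSsym : S⁻¹ = S) (a : G) (l : List G)
    (hl : ∀ x ∈ l, x ∈ S) (hmin : l.length = wordLength S l.prod) :
    IsGeodesic S (fun i => a * (l.take i).prod) l.length := by
  have key : ∀ i j, i ≤ j → j ≤ l.length →
      wdist S (a * (l.take i).prod) (a * (l.take j).prod) ≤ j - i := by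
    intro i j hij hjn
    have hseg : (a * (l.take i).prod)⁻¹ * (a * (l.take j).prod)
        = ((l.drop i).take (j - i)).prod := by
      have : l.take j = l.take i ++ (l.drop i).take (j - i) := by
        rw [← List.take_add]
        congr 1
        omega
      rw [this]
      simp [List.prod_append, mul_assoc]
    have hsub : ∀ x ∈ (l.drop i).take (j - i), x ∈ S := by
      intro x hx
      exact hl x (List.mem_of_mem_drop (List.mem_of_mem_take hx))
    calc wdist S (a * (l.take i).prod) (a * (l.take j).prod)
        = wordLength S ((l.drop i).take (j - i)).prod := by rw [wdist, hseg]
      _ ≤ ((l.drop i).take (j - i)).length := wordLength_le_length S _ hsub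
      _ ≤ j - i := by simp [List.length_take]
  have hmem : ∀ i j : ℕ, (a * (l.take i).prod)⁻¹ * (a * (l.take j).prod)
      ∈ Subgroup.closure S := by
    intro i j
    have hi : (l.take i).prod ∈ Subgroup.closure S :=
      Subgroup.list_prod_mem _ (fun x hx => Subgroup.subset_closure (hl x (List.mem_of_mem_take hx)))
    have hj : (l.take j).prod ∈ Subgroup.closure S :=
      Subgroup.list_prod_mem _ (fun x hx => Subgroup.subset_closure (hl x (List.mem_of_mem_take hx)))
    have : (a * (l.take i).prod)⁻¹ * (a * (l.take j).prod)
        = ((l.take i).prod)⁻¹ * (l.take j).prod := by group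
    rw [this]
    exact Subgroup.mul_mem _ (Subgroup.inv_mem _ hi) hj
  intro i j hij hjn
  show wdist S (a * (l.take i).prod) (a * (l.take j).prod) = j - i
  refine le_antisymm (key i j hij hjn) ?_
  -- lower bound via the triangle inequality
  have h0n : wdist S (a * (l.take 0).prod) (a * (l.take l.length).prod) = l.length := by
    simp only [List.take_zero, List.prod_nil, mul_one, List.take_length]
    rw [wdist]
    have : a⁻¹ * (a * l.prod) = l.prod := by group
    rw [this, ← hmin]
  have t1 : wdist S (a * (l.take 0).prod) (a * (l.take l.length).prod) ≤
      wdist S (a * (l.take 0).prod) (a * (l.take i).prod) +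
      (wdist S (a * (l.take i).prod) (a * (l.take j).prod) +
       wdist S (a * (l.take j).prod) (a * (l.take l.length).prod)) := by
    calc wdist S (a * (l.take 0).prod) (a * (l.take l.length).prod)
        ≤ wdist S (a * (l.take 0).prod) (a * (l.take i).prod) +
          wdist S (a * (l.take i).prod) (a * (l.take l.length).prod) :=
          wdist_triangle S hSsym (hmem 0 i) (hmem i l.length)
      _ ≤ _ := by
          have := wdist_triangle S hSsym (hmem i j) (hmem j l.length)
          omega
  have hb1 := key 0 i (Nat.zero_le _) (le_trans hij hjn)
  have hb2 := key j l.length hjn le_rfl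
  omega

/-- For any two points there is a geodesic connecting them. -/
lemma exists_geodesic (S : Set G) (hSsym : S⁻¹ = S) {a b : G}
    (hab : a⁻¹ * b ∈ Subgroup.closure S) :
    ∃ p : ℕ → G, IsGeodesic S p (wdist S a b) ∧ p 0 = a ∧ p (wdist S a b) = b := by
  obtain ⟨l, hl, hlen, hp⟩ := exists_min_word S hSsym hab
  have hwd : wdist S a b = l.length := by rw [wdist, ← hlen]
  refine ⟨fun i => a * (l.take i).prod, ?_, by simp, ?_⟩
  · rw [hwd]
    exact prefix_geodesic S hSsym a l hl (by rw [hp, ← hlen])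
  · rw [hwd]
    simp [hp]

lemma IsGeodesic.shift (S : Set G) {p : ℕ → G} {n : ℕ} (hp : IsGeodesic S p n)
    {a b : ℕ} (hab : a ≤ b) (hbn : b ≤ n) :
    IsGeodesic S (fun k => p (a + k)) (b - a) := by
  intro i j hij hj
  have := hp (a + i) (a + j) (by omega) (by omega)
  simpa [Nat.add_sub_add_left] using this

lemma thin_path (S : Set G) (hSsym : S⁻¹ = S) (hSgen : Subgroup.closure S = ⊤)
    {δ : ℝ} (hδ : 0 ≤ δ) (hslim : SlimTriangles S δ) :
    ∀ L : ℕ, 1 ≤ L → ∀ z : ℕ → G, (∀ k, k < L → wdist S (z k) (z (k+1)) ≤ 1) →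
    ∀ (g : ℕ → G) (mg : ℕ), IsGeodesic S g mg → g 0 = z 0 → g mg = z L →
    ∀ i ≤ mg, ∃ k ≤ L, (wdist S (g i) (z k) : ℝ) ≤ δ * (Nat.clog 2 L) + 1 := by
  intro L
  induction L using Nat.strong_induction_on with
  | _ L IH =>
    intro hL z hz g mg hg hg0 hgL i hi
    rcases eq_or_lt_of_le hL with h1 | h2
    · -- L = 1
      refine ⟨0, Nat.zero_le _, ?_⟩
      have hmg : mg ≤ 1 := by
        have := hg 0 mg (Nat.zero_le _) le_rfl
        have h01 := hz 0 (by omega)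
        norm_num at h01
        rw [hg0, hgL, ← h1] at this
        omega
      have : wdist S (g i) (z 0) = i := by
        rw [← hg0, wdist_symm S hSsym]
        have := hg 0 i (Nat.zero_le _) hi
        omega
      rw [this, ← h1]
      simp only [Nat.clog_one_right, Nat.cast_zero, mul_zero, zero_add]
      exact_mod_cast (by omega : i ≤ 1)
    · -- L ≥ 2
      set hm := (L + 1) / 2 with hhm
      have hm1 : 1 ≤ hm := by omega
      have hmL : hm < L := by omega
      obtain ⟨q1, hq1, hq10, hq1e⟩ := exists_geodesic S hSsym
        (hSgen ▸ Subgroup.mem_top ((z 0)⁻¹ * z hm))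
      obtain ⟨q2, hq2, hq20, hq2e⟩ := exists_geodesic S hSsym
        (hSgen ▸ Subgroup.mem_top ((z hm)⁻¹ * z L))
      set m1 := wdist S (z 0) (z hm)
      set m2 := wdist S (z hm) (z L)
      obtain ⟨j, hj⟩ := hslim q1 q2 g m1 m2 mg hq1 hq2 hg
        (by rw [hq1e, hq20]) (by rw [hg0, hq10]) (by rw [hgL, hq2e]) i hi
      have hclog : Nat.clog 2 L = Nat.clog 2 hm + 1 := by
        rw [Nat.clog_of_two_le (by norm_num) (by omega)]
        have he : (L + 2 - 1) / 2 = hm := by omega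
        rw [he]
      rcases hj with ⟨hjm, hjd⟩ | ⟨hjm, hjd⟩
      · -- close to q1, geodesic from z 0 to z hm
        obtain ⟨k, hk, hkd⟩ := IH hm hmL hm1 z (fun k hk => hz k (by omega))
          q1 m1 hq1 hq10 hq1e j hjm
        refine ⟨k, by omega, ?_⟩
        have htri := wdist_triangle' S hSsym hSgen (g i) (q1 j) (z k)
        have : (wdist S (g i) (z k) : ℝ) ≤ (wdist S (g i) (q1 j) : ℝ) +
            (wdist S (q1 j) (z k) : ℝ) := by exact_mod_cast htri
        rw [hclog]
        push_cast
        linarith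
      · -- close to q2, geodesic from z hm to z L
        obtain ⟨k, hk, hkd⟩ := IH (L - hm) (by omega) (by omega)
          (fun k => z (hm + k)) (fun k hk => hz (hm + k) (by omega))
          q2 m2 hq2 (by simp [hq20]) (by rw [hq2e]; congr 1; omega) j hjm
        refine ⟨hm + k, by omega, ?_⟩
        have htri := wdist_triangle' S hSsym hSgen (g i) (q2 j) (z (hm + k))
        have hcast : (wdist S (g i) (z (hm + k)) : ℝ) ≤ (wdist S (g i) (q2 j) : ℝ) +
            (wdist S (q2 j) (z (hm + k)) : ℝ) := by exact_mod_cast htri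
        have hmono : (Nat.clog 2 (L - hm) : ℝ) ≤ (Nat.clog 2 hm : ℝ) := by
          exact_mod_cast Nat.clog_mono_right 2 (by omega)
        have hdnn : (0 : ℝ) ≤ δ * (Nat.clog 2 hm) - δ * (Nat.clog 2 (L - hm)) := by
          nlinarith
        rw [hclog]
        push_cast
        nlinarith
      
lemma sq_le_two_pow : ∀ j : ℕ, 8 ≤ j → 4 * j ^ 2 ≤ 2 ^ j := by
  intro j hj
  induction j, hj using Nat.le_induction with
  | base => norm_num
  | succ n hn ih =>
    have h1 : 4 * (n + 1) ^ 2 ≤ 2 * (4 * n ^ 2) := by nlinarith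
    have h2 : 2 * (4 * n ^ 2) ≤ 2 * 2 ^ n := by omega
    calc 4 * (n + 1) ^ 2 ≤ 2 * 2 ^ n := le_trans h1 h2
      _ = 2 ^ (n + 1) := by ring

lemma absorb (δ K₁ K₂ : ℝ) (hδ : 0 ≤ δ) (hK₁ : 0 ≤ K₁) (hK₂ : 1 ≤ K₂) :
    ∃ C : ℝ, 0 ≤ C ∧ ∀ D L' : ℕ, 1 ≤ L' → (L' : ℝ) ≤ K₁ * D + K₂ →
      (D : ℝ) ≤ δ * (Nat.clog 2 L') + 1 → (D : ℝ) ≤ C := by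
  set A := (K₁ + K₂) * (δ + 1) with hA
  have hA0 : 0 < A := by nlinarith
  set N := max 8 (⌈2 * A⌉₊) + 1 with hN
  refine ⟨δ * N + 1, by positivity, ?_⟩
  intro D L' hL1 hLb hDb
  have hkey : Nat.clog 2 L' ≤ N := by
    by_contra hcon
    push_neg at hcon
    set k := Nat.clog 2 L' with hk
    have hL2 : 2 ≤ L' := by
      rcases Nat.lt_or_ge L' 2 with h | h
      · exfalso
        have : L' = 1 := by omega
        rw [this] at hk
        simp [Nat.clog_one_right] at hk
        omega
      · exact h
    have hpow : 2 ^ (k - 1) < L' := Nat.pow_pred_clog_lt_self (by norm_num) (by omega)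
    set j := k - 1 with hj
    have hkj : k = j + 1 := by
      have : 1 ≤ k := by omega
      omega
    have hj8 : 8 ≤ j := by omega
    have hjA : 2 * A ≤ (j : ℝ) := by
      have h1 : (⌈2 * A⌉₊ : ℝ) ≤ (j : ℝ) := by exact_mod_cast Nat.le_of_lt (by omega)
      exact le_trans (Nat.le_ceil _) h1
    have h2 : ((2:ℕ) ^ j : ℝ) < K₁ * D + K₂ := by
      have : ((2:ℕ) ^ j : ℝ) < (L' : ℝ) := by exact_mod_cast hpow
      linarith
    have h3 : K₁ * (D:ℝ) + K₂ ≤ A * ((j:ℝ) + 2) := by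
      have hDk : (D:ℝ) ≤ δ * ((j:ℝ) + 1) + 1 := by
        have : ((k:ℕ) : ℝ) = (j : ℝ) + 1 := by exact_mod_cast hkj
        rw [← this]
        exact hDb
      have hj0 : (0:ℝ) ≤ (j:ℝ) := Nat.cast_nonneg _
      nlinarith
    have h4 : ((4 * j ^ 2 : ℕ) : ℝ) ≤ ((2 ^ j : ℕ) : ℝ) := by
      exact_mod_cast sq_le_two_pow j hj8
    have hj2 : (2:ℝ) ≤ (j:ℝ) := by exact_mod_cast (by omega : 2 ≤ j)
    have h5 : A * ((j:ℝ) + 2) ≤ (j:ℝ) * (j:ℝ) := by nlinarith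
    push_cast at h4 h2
    nlinarith
  have : (D:ℝ) ≤ δ * (Nat.clog 2 L') + 1 := hDb
  have hmono : (Nat.clog 2 L' : ℝ) ≤ (N : ℝ) := by exact_mod_cast hkey
  nlinarith

/-- Construction of the unit-speed path following a word `t`, with each letter
expanded into a geodesic in `S`, padded to blocks of length `M`. -/
lemma tau_package (S : Set G) (hSsym : S⁻¹ = S) (hSgen : Subgroup.closure S = ⊤)
    (p0 : G) (t : List G) (M : ℕ) (hM : 1 ≤ M)
    (hstepM : ∀ q < t.length,
      wdist S (p0 * (t.take q).prod) (p0 * (t.take (q+1)).prod) < M) :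
    ∃ τ : ℕ → G, τ 0 = p0 * (t.take 0).prod ∧
      (∀ k, t.length * M ≤ k → τ k = p0 * (t.take t.length).prod) ∧
      (∀ k, wdist S (τ k) (τ (k+1)) ≤ 1) ∧
      (∀ k ≤ t.length * M, k / M ≤ t.length ∧
        wdist S (τ k) (p0 * (t.take (k / M)).prod) ≤ M) := by
  set m := t.length with hm
  set σ : ℕ → G := fun q => p0 * (t.take q).prod with hσ
  set len : ℕ → ℕ := fun q => wdist S (σ q) (σ (q+1)) with hlen
  have hgeo : ∀ q : ℕ, ∃ g : ℕ → G, IsGeodesic S g (len q) ∧ g 0 = σ q ∧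
      g (len q) = σ (q+1) := fun q =>
    exists_geodesic S hSsym (hSgen ▸ Subgroup.mem_top _)
  choose g hg using hgeo
  set τ : ℕ → G := fun k => if k / M < m then g (k/M) (min (k % M) (len (k/M))) else σ m
    with hτ
  have hM0 : 0 < M := hM
  refine ⟨τ, ?_, ?_, ?_, ?_⟩
  · -- τ 0 = σ 0   (need m ≥ 1 or m = 0 case)
    rcases Nat.eq_zero_or_pos m with h0 | h1
    · show (if 0 / M < m then _ else σ m) = σ 0
      rw [h0]
      simp
    · show (if 0 / M < m then g (0/M) (min (0 % M) (len (0/M))) else σ m) = σ 0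
      rw [Nat.zero_div, Nat.zero_mod]
      rw [if_pos h1]
      simp [(hg 0).2.1]
  · -- tail constant
    intro k hk
    have hq : m ≤ k / M := (Nat.le_div_iff_mul_le hM0).mpr hk
    show (if k / M < m then _ else σ m) = σ m
    rw [if_neg (by omega)]
  · -- unit steps
    intro k
    set q := k / M with hq
    set r := k % M with hr
    have hrM : r < M := Nat.mod_lt _ hM0
    have hdm : M * q + r = k := Nat.div_add_mod k M
    rcases Nat.lt_or_ge (r + 1) M with hcase | hcase
    · -- same block
      have hdiv : (k+1) / M = q ∧ (k+1) % M = r + 1 :=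
        (Nat.div_mod_unique hM0).mpr ⟨by omega, hcase⟩
      rcases Nat.lt_or_ge q m with hqm | hqm
      · show wdist S (if k / M < m then _ else σ m)
            (if (k+1) / M < m then g ((k+1)/M) (min ((k+1) % M) (len ((k+1)/M))) else σ m) ≤ 1
        rw [hdiv.1, hdiv.2, ← hq, ← hr, if_pos hqm, if_pos hqm]
        rcases Nat.lt_or_ge r (len q) with hrl | hrl
        · have hmin1 : min r (len q) = r := by omega
          have hmin2 : min (r + 1) (len q) = r + 1 := by omega
          rw [hmin1, hmin2]
          have := (hg q).1 r (r+1) (by omega) (by omega)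
          omega
        · have hmin1 : min r (len q) = len q := by omega
          have hmin2 : min (r + 1) (len q) = len q := by omega
          rw [hmin1, hmin2, wdist_self]
          omega
      · show wdist S (if k / M < m then _ else σ m)
            (if (k+1) / M < m then _ else σ m) ≤ 1
        rw [hdiv.1, ← hq, if_neg (by omega), if_neg (by omega), wdist_self]
        omega
    · -- block boundary : r + 1 = M
      have hrM1 : r + 1 = M := by omega
      have hdiv : (k+1) / M = q + 1 ∧ (k+1) % M = 0 :=
        (Nat.div_mod_unique hM0).mpr
          ⟨(by have h : M * (q+1) = M*q + M := by ring
               omega), hM0⟩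
      rcases Nat.lt_or_ge q m with hqm | hqm
      · have hlenq : len q < M := hstepM q hqm
        have hmin1 : min r (len q) = len q := by omega
        have hτk : τ k = σ (q+1) := by
          show (if k / M < m then _ else σ m) = σ (q+1)
          rw [← hq, if_pos hqm, hmin1]
          exact (hg q).2.2
        rcases Nat.lt_or_ge (q+1) m with hq1m | hq1m
        · have hτk1 : τ (k+1) = σ (q+1) := by
            show (if (k+1) / M < m then g ((k+1)/M) (min ((k+1) % M) (len ((k+1)/M)))
              else σ m) = σ (q+1)
            rw [hdiv.1, hdiv.2, if_pos hq1m]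
            simpa using (hg (q+1)).2.1
          rw [hτk, hτk1, wdist_self]
          omega
        · have hq1m' : q + 1 = m := by omega
          have hτk1 : τ (k+1) = σ m := by
            show (if (k+1) / M < m then _ else σ m) = σ m
            rw [hdiv.1, if_neg (by omega)]
          rw [hτk, hτk1, hq1m', wdist_self]
          omega
      · have hτk : τ k = σ m := by
          show (if k / M < m then _ else σ m) = σ m
          rw [← hq, if_neg (by omega)]
        have hτk1 : τ (k+1) = σ m := by
          show (if (k+1) / M < m then _ else σ m) = σ m
          rw [hdiv.1, if_neg (by omega)]
        rw [hτk, hτk1, wdist_self]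
        omega
  · -- block position
    intro k hk
    have hqle : k / M ≤ m := by
      have := Nat.div_le_div_right (c := M) hk
      rwa [Nat.mul_div_cancel _ hM0] at this
    refine ⟨hqle, ?_⟩
    set q := k / M with hq
    rcases Nat.lt_or_ge q m with hqm | hqm
    · have hτk : τ k = g q (min (k % M) (len q)) := by
        show (if k / M < m then _ else σ m) = _
        rw [← hq, if_pos hqm]
      rw [hτk]
      have h1 : wdist S (g q 0) (g q (min (k % M) (len q))) = min (k % M) (len q) := by
        have := (hg q).1 0 (min (k % M) (len q)) (Nat.zero_le _) (by omega)
        omega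
      rw [wdist_symm S hSsym]
      rw [(hg q).2.1] at h1
      simp only [hσ] at h1 ⊢
      have hlenq : len q < M := hstepM q hqm
      omega
    · have hqm' : q = m := by omega
      have hτk : τ k = σ m := by
        show (if k / M < m then _ else σ m) = σ m
        rw [← hq, if_neg (by omega)]
      rw [hτk, hqm', wdist_self]
      omega

end QCAux

open QCAux in
set_option maxHeartbeats 2000000 in
/-- A finitely generated undistorted subgroup of a hyperbolic group is quasiconvex. -/
theorem undistorted_quasiconvex (S : Set G) (hSfin : S.Finite) (hSsym : S⁻¹ = S)
    (hSgen : Subgroup.closure S = ⊤) (δ : ℝ) (hδ : 0 ≤ δ) (hslim : SlimTriangles S δ)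
    (H : Subgroup G) (T : Set G) (hTfin : T.Finite) (hTsub : T ⊆ (H : Set G))
    (hTsym : T⁻¹ = T) (hTgen : Subgroup.closure T = H)
    (c : ℝ) (hc : 0 < c) (hund : ∀ h ∈ H, (wordLength T h : ℝ) ≤ c * (wordLength S h : ℝ)) :
    ∃ ε : ℝ, 0 ≤ ε ∧ IsQuasiconvex S ε (H : Set G) := by
  classical
  -- `M` bounds (strictly) the `S`-length of every generator in `T`
  set M : ℕ := (hTfin.toFinset.sup (fun x => wordLength S x)) + 1 with hMdef
  have hM1 : 1 ≤ M := by omega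
  have hMx : ∀ x ∈ T, wordLength S x < M := by
    intro x hx
    have : wordLength S x ≤ hTfin.toFinset.sup (fun x => wordLength S x) :=
      Finset.le_sup (by simpa using hx)
    omega
  have hM0R : (0:ℝ) ≤ (M:ℝ) := Nat.cast_nonneg _
  set K₁ : ℝ := 6 * M * c + 2 with hK₁def
  set K₂ : ℝ := 2 * M * M * c + M + 1 with hK₂def
  have hK₁0 : 0 ≤ K₁ := by
    rw [hK₁def]; positivity
  have hK₂1 : 1 ≤ K₂ := by
    rw [hK₂def]
    have h0 : (0:ℝ) ≤ 2 * (M:ℝ) * M * c := by positivity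
    linarith
  obtain ⟨C, hC0, hCprop⟩ := absorb δ K₁ K₂ hδ hK₁0 hK₂1
  refine ⟨C + M, by linarith, ?_⟩
  intro p n hp hp0 hpn i hin
  -- the word in `T` connecting the endpoints
  have hh : (p 0)⁻¹ * p n ∈ Subgroup.closure T := by
    rw [hTgen]
    exact mul_mem (inv_mem hp0) hpn
  obtain ⟨t, ht, htlen, htprod⟩ := exists_min_word T hTsym hh
  set m := t.length with hmdef
  rcases Nat.eq_zero_or_pos m with hm0 | hm1
  · -- degenerate case : p n = p 0
    have ht0 : t = [] := List.length_eq_zero_iff.mp (by omega)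
    have h1 : (p 0)⁻¹ * p n = 1 := by rw [← htprod, ht0, List.prod_nil]
    have hn0 : n = 0 := by
      have h2 := hp 0 n (Nat.zero_le _) le_rfl
      rw [wdist, h1, wordLength_one] at h2
      omega
    have hi0 : i = 0 := by omega
    refine ⟨p 0, hp0, ?_⟩
    rw [hi0, wdist_self]
    push_cast
    linarith
  -- σ : the T-geodesic through H
  have hσgeo : IsGeodesic T (fun q => p 0 * (t.take q).prod) m :=
    prefix_geodesic T hTsym (p 0) t ht (by rw [htprod, ← htlen])
  have hσH : ∀ q : ℕ, p 0 * (t.take q).prod ∈ H := by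
    intro q
    exact mul_mem hp0 (Subgroup.list_prod_mem _
      (fun x hx => hTsub (ht x (List.mem_of_mem_take hx))))
  have hσHd : ∀ u v : ℕ, (p 0 * (t.take u).prod)⁻¹ * (p 0 * (t.take v).prod) ∈ H := by
    intro u v
    have he : (p 0 * (t.take u).prod)⁻¹ * (p 0 * (t.take v).prod)
        = ((t.take u).prod)⁻¹ * (t.take v).prod := by group
    rw [he]
    exact mul_mem (inv_mem (Subgroup.list_prod_mem _
      (fun x hx => hTsub (ht x (List.mem_of_mem_take hx)))))
      (Subgroup.list_prod_mem _ (fun x hx => hTsub (ht x (List.mem_of_mem_take hx))))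
  have hstepM : ∀ q < m, wdist S (p 0 * (t.take q).prod) (p 0 * (t.take (q+1)).prod) < M := by
    intro q hq
    have hq' : q < t.length := by omega
    have hget : (t.take (q+1)).prod = (t.take q).prod * t[q] := by
      rw [List.take_succ]
      rw [List.prod_append]
      rw [List.getElem?_eq_getElem hq']
      simp
    have he : (p 0 * (t.take q).prod)⁻¹ * (p 0 * (t.take (q+1)).prod) = t[q] := by
      rw [hget]; group
    rw [wdist, he]
    exact hMx _ (ht _ (List.getElem_mem hq'))
  obtain ⟨τ, hτ0', hτend, hτunit, hτblock⟩ :=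
    tau_package S hSsym hSgen (p 0) t M hM1 (by rw [← hmdef]; exact hstepM)
  have hτ0 : τ 0 = p 0 := by rw [hτ0']; simp
  have hτL : τ (m * M) = p n := by
    rw [hτend (m * M) (by rw [hmdef])]
    rw [List.take_length, htprod]
    group
  set L := m * M with hLdef
  -- distance from geodesic points to the path τ
  set dτ : ℕ → ℕ := fun i =>
    (Finset.range (L+1)).inf' Finset.nonempty_range_add_one (fun k => wdist S (p i) (τ k))
    with hdτdef
  set D : ℕ := (Finset.range (n+1)).sup' Finset.nonempty_range_add_one dτ with hDdef
  have hdτle : ∀ j ≤ n, dτ j ≤ D := by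
    intro j hj
    exact Finset.le_sup' dτ (Finset.mem_range.mpr (by omega))
  have hdτatt : ∀ j : ℕ, ∃ k ≤ L, wdist S (p j) (τ k) = dτ j := by
    intro j
    obtain ⟨k, hk, hke⟩ := Finset.exists_mem_eq_inf' (Finset.nonempty_range_add_one
      (n := L)) (fun k => wdist S (p j) (τ k))
    exact ⟨k, by simpa using Nat.lt_succ_iff.mp (Finset.mem_range.mp hk), hke.symm⟩
  have hdτlb : ∀ j k : ℕ, k ≤ L → dτ j ≤ wdist S (p j) (τ k) := by
    intro j k hk
    exact Finset.inf'_le _ (Finset.mem_range.mpr (by omega))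
  -- the key bound : D ≤ C
  have hDC : (D : ℝ) ≤ C := by
    obtain ⟨i₀, hi₀mem, hi₀⟩ := Finset.exists_mem_eq_sup'
      (Finset.nonempty_range_add_one (n := n)) dτ
    have hi₀n : i₀ ≤ n := Nat.lt_succ_iff.mp (Finset.mem_range.mp hi₀mem)
    have hDeq : D = dτ i₀ := hi₀
    have hDlb : ∀ k ≤ L, D ≤ wdist S (p i₀) (τ k) := by
      intro k hk
      rw [hDeq]
      exact hdτlb i₀ k hk
    set j1 := i₀ - 2 * D with hj1def
    set j2 := min n (i₀ + 2 * D) with hj2def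
    have hj1 : j1 ≤ i₀ := by omega
    have hj2 : i₀ ≤ j2 := by omega
    have hj2n : j2 ≤ n := by omega
    have claim1 : ∃ k1 ≤ L, wdist S (p j1) (τ k1) ≤ D ∧
        (2 * D ≤ i₀ ∨ (wdist S (p j1) (τ k1) = 0 ∧ p j1 = τ 0)) := by
      by_cases hb : 2 * D ≤ i₀
      · obtain ⟨k, hk, hke⟩ := hdτatt j1
        exact ⟨k, hk, hke ▸ hdτle j1 (by omega), Or.inl hb⟩
      · have hpj1 : p j1 = τ 0 := by rw [hτ0]; congr 1; omega
        exact ⟨0, Nat.zero_le _, by rw [hpj1, wdist_self]; omega,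
          Or.inr ⟨by rw [hpj1, wdist_self], hpj1⟩⟩
    have claim2 : ∃ k2 ≤ L, wdist S (p j2) (τ k2) ≤ D ∧
        (i₀ + 2 * D ≤ n ∨ wdist S (p j2) (τ k2) = 0) := by
      by_cases hb : i₀ + 2 * D ≤ n
      · obtain ⟨k, hk, hke⟩ := hdτatt j2
        exact ⟨k, hk, hke ▸ hdτle j2 (by omega), Or.inl hb⟩
      · have hpj2 : p j2 = τ L := by
          rw [hτL]; congr 1; omega
        exact ⟨L, le_rfl, by rw [hpj2, wdist_self]; omega,
          Or.inr (by rw [hpj2, wdist_self])⟩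
    obtain ⟨k1, hk1L, hk1d, hk1alt⟩ := claim1
    obtain ⟨k2, hk2L, hk2d, hk2alt⟩ := claim2
    obtain ⟨g1, hg1, hg10, hg1e⟩ := exists_geodesic S hSsym
      (hSgen ▸ Subgroup.mem_top ((p j1)⁻¹ * τ k1))
    obtain ⟨g2, hg2, hg20, hg2e⟩ := exists_geodesic S hSsym
      (hSgen ▸ Subgroup.mem_top ((τ k2)⁻¹ * p j2))
    set d1 := wdist S (p j1) (τ k1) with hd1def
    set d2 := wdist S (τ k2) (p j2) with hd2def
    have hd2D : d2 ≤ D := by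
      rw [hd2def, wdist_symm S hSsym]
      exact hk2d
    set LM := max k1 k2 - min k1 k2 with hLMdef
    set mid : ℕ → G := fun s => τ (if k1 ≤ k2 then k1 + s else k1 - s) with hmiddef
    have hmideval : ∀ s, mid s = τ (if k1 ≤ k2 then k1 + s else k1 - s) := fun _ => rfl
    have hmid0 : mid 0 = τ k1 := by
      rw [hmideval]
      by_cases h : k1 ≤ k2 <;> simp [h]
    have hmidLM : mid LM = τ k2 := by
      rw [hmideval]
      rcases le_total k1 k2 with h | h
      · rw [if_pos h]; congr 1; omega
      · by_cases h' : k1 ≤ k2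
        · rw [if_pos h']; congr 1; omega
        · rw [if_neg h']; congr 1; omega
    have hmididx : ∀ s ≤ LM, (if k1 ≤ k2 then k1 + s else k1 - s) ≤ L := by
      intro s hs
      by_cases h : k1 ≤ k2
      · rw [if_pos h]; omega
      · rw [if_neg h]; omega
    set ℓ := d1 + LM + d2 with hℓdef
    set π : ℕ → G := fun k => if k ≤ d1 then g1 k else if k ≤ d1 + LM then mid (k - d1)
      else g2 (min (k - (d1 + LM)) d2) with hπdef
    have hπeval : ∀ k, π k = if k ≤ d1 then g1 k else if k ≤ d1 + LM then mid (k - d1)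
      else g2 (min (k - (d1 + LM)) d2) := fun _ => rfl
    have hE1 : ∀ k ≤ d1, π k = g1 k := by
      intro k hk
      rw [hπeval, if_pos hk]
    have hk1k2 : LM = 0 → τ k1 = τ k2 := by
      intro h
      have he : k1 = k2 := by omega
      rw [he]
    have hE2 : ∀ s ≤ LM, π (d1 + s) = mid s := by
      intro s hs
      rw [hπeval]
      by_cases h : d1 + s ≤ d1
      · have hs0 : s = 0 := by omega
        subst hs0
        rw [if_pos h, hmid0]
        simpa using hg1e
      · rw [if_neg h, if_pos (by omega)]
        congr 1
        omega
    have hE2' : ∀ k, d1 ≤ k → k ≤ d1 + LM → π k = mid (k - d1) := by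
      intro k h1 h2
      have h3 := hE2 (k - d1) (by omega)
      rw [show d1 + (k - d1) = k by omega] at h3
      exact h3
    have hE3 : ∀ v ≤ d2, π (d1 + LM + v) = g2 v := by
      intro v hv
      rw [hπeval]
      by_cases h : d1 + LM + v ≤ d1
      · have hLM0 : LM = 0 := by omega
        have hv0 : v = 0 := by omega
        subst hv0
        rw [if_pos h, show d1 + LM + 0 = d1 by omega, hg1e, hg20]
        exact hk1k2 hLM0
      · by_cases h' : d1 + LM + v ≤ d1 + LM
        · have hv0 : v = 0 := by omega
          subst hv0
          rw [if_neg h, if_pos h', show d1 + LM + 0 - d1 = LM by omega, hmidLM, hg20]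
        · rw [if_neg h, if_neg h']
          congr 1
          omega
    have hE4 : ∀ k, ℓ ≤ k → π k = p j2 := by
      intro k hk
      rw [hπeval]
      by_cases h : k ≤ d1
      · have h1 : LM = 0 ∧ d2 = 0 ∧ k = d1 := by omega
        rw [if_pos h, h1.2.2, hg1e, hk1k2 h1.1, ← hg20, show (0:ℕ) = d2 by omega, hg2e]
      · by_cases h' : k ≤ d1 + LM
        · have h2 : d2 = 0 := by omega
          rw [if_neg h, if_pos h', show k - d1 = LM by omega, hmidLM, ← hg20,
            show (0:ℕ) = d2 by omega, hg2e]
        · rw [if_neg h, if_neg h', show min (k - (d1 + LM)) d2 = d2 by omega, hg2e]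
    have hπunit : ∀ k, wdist S (π k) (π (k+1)) ≤ 1 := by
      intro k
      rcases Nat.lt_or_ge k d1 with hr1 | hr1
      · rw [hE1 k (by omega), hE1 (k+1) (by omega)]
        have := hg1 k (k+1) (by omega) (by omega)
        omega
      · rcases Nat.lt_or_ge k (d1 + LM) with hr2 | hr2
        · rw [hE2' k (by omega) (by omega), hE2' (k+1) (by omega) (by omega)]
          rw [hmideval, hmideval, show k + 1 - d1 = (k - d1) + 1 by omega]
          set s := k - d1 with hsdef
          have hsLM : s + 1 ≤ LM := by omega
          by_cases h : k1 ≤ k2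
          · rw [if_pos h, if_pos h, show k1 + (s + 1) = (k1 + s) + 1 by omega]
            exact hτunit (k1 + s)
          · rw [if_neg h, if_neg h, show k1 - s = (k1 - (s+1)) + 1 by omega,
              wdist_symm S hSsym]
            exact hτunit _
        · rcases Nat.lt_or_ge (k - (d1 + LM)) d2 with hr3 | hr3
          · have h1 : π k = g2 (k - (d1 + LM)) := by
              have h3 := hE3 (k - (d1 + LM)) (by omega)
              rw [show d1 + LM + (k - (d1 + LM)) = k by omega] at h3
              exact h3
            have h2 : π (k+1) = g2 (k - (d1 + LM) + 1) := by
              have h3 := hE3 (k - (d1 + LM) + 1) (by omega)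
              rw [show d1 + LM + (k - (d1 + LM) + 1) = k + 1 by omega] at h3
              exact h3
            rw [h1, h2]
            have := hg2 (k - (d1 + LM)) (k - (d1 + LM) + 1) (by omega) (by omega)
            omega
          · rw [hE4 k (by omega), hE4 (k+1) (by omega), wdist_self]
            omega
    -- lower bound : every point of π is at distance ≥ D from p i₀
    have hg1lb : ∀ s ≤ d1, D ≤ wdist S (p i₀) (g1 s) := by
      intro s hs
      rcases hk1alt with hb | ⟨hb0, hbe⟩
      · have hxj1 : wdist S (p i₀) (p j1) = 2 * D := by
          rw [wdist_symm S hSsym]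
          have := hp j1 i₀ hj1 hi₀n
          omega
        have htri := wdist_triangle' S hSsym hSgen (p i₀) (g1 s) (p j1)
        have hg1s : wdist S (g1 s) (p j1) = s := by
          rw [wdist_symm S hSsym, ← hg10]
          have := hg1 0 s (by omega) hs
          omega
        omega
      · have hs0 : s = 0 := by omega
        have he : g1 s = τ 0 := by rw [hs0, hg10, hbe]
        rw [he]
        exact hDlb 0 (Nat.zero_le _)
    have hg2lb : ∀ v ≤ d2, D ≤ wdist S (p i₀) (g2 v) := by
      intro v hv
      rcases hk2alt with hb | hb0
      · have hxj2 : wdist S (p i₀) (p j2) = 2 * D := by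
          have := hp i₀ j2 hj2 hj2n
          omega
        have htri := wdist_triangle' S hSsym hSgen (p i₀) (g2 v) (p j2)
        have hg2v : wdist S (g2 v) (p j2) = d2 - v := by
          rw [← hg2e]
          have := hg2 v d2 hv le_rfl
          omega
        omega
      · have hd20 : d2 = 0 := by rw [hd2def, wdist_symm S hSsym]; exact hb0
        have hv0 : v = 0 := by omega
        rw [hv0, hg20]
        exact hDlb k2 hk2L
    have hπlb : ∀ k, (D:ℝ) ≤ wdist S (p i₀) (π k) := by
      intro k
      rcases le_or_gt k d1 with hr1 | hr1
      · rw [hE1 k hr1]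
        exact_mod_cast hg1lb k hr1
      · rcases le_or_gt k (d1 + LM) with hr2 | hr2
        · rw [hE2' k (by omega) hr2, hmideval]
          exact_mod_cast hDlb _ (hmididx (k - d1) (by omega))
        · rw [hπeval, if_neg (by omega), if_neg (by omega)]
          exact_mod_cast hg2lb _ (by omega)
    -- length estimate for π
    set L' := max ℓ 1 with hL'def
    have hπL' : π L' = p j2 := hE4 L' (le_max_left _ _)
    have hπ0 : π 0 = p j1 := by rw [hE1 0 (Nat.zero_le _), hg10]
    have hLM : (LM : ℝ) ≤ M * (c * (6 * D + 2 * M)) + M := by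
      set a := min k1 k2 with hadef
      set b := max k1 k2 with hbdef
      have hab : a ≤ b := by omega
      have haL : a ≤ L := by omega
      have hbL : b ≤ L := by omega
      set u := a / M with hudef
      set v := b / M with hvdef
      have huv : u ≤ v := Nat.div_le_div_right hab
      have hvm : v ≤ m := (hτblock b hbL).1
      have hta : wdist S (τ a) (p 0 * (t.take u).prod) ≤ M := (hτblock a haL).2
      have htb : wdist S (τ b) (p 0 * (t.take v).prod) ≤ M := (hτblock b hbL).2
      -- T-distance between block points
      have hTdist : wdist T (p 0 * (t.take u).prod) (p 0 * (t.take v).prod) = v - u :=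
        hσgeo u v huv hvm
      have hundH := hund _ (hσHd u v)
      -- distance between the endpoints of the τ-segment
      have hττ : wdist S (τ a) (τ b) ≤ 6 * D := by
        have h12 : wdist S (τ k1) (τ k2) ≤ 6 * D := by
          have t1 := wdist_triangle' S hSsym hSgen (τ k1) (p j1) (τ k2)
          have t2 := wdist_triangle' S hSsym hSgen (p j1) (p j2) (τ k2)
          have e1 : wdist S (τ k1) (p j1) = d1 := by rw [wdist_symm S hSsym]
          have e2 : wdist S (p j1) (p j2) = j2 - j1 := hp j1 j2 (by omega) hj2n
          have e3 : wdist S (p j2) (τ k2) ≤ D := hk2d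
          omega
        rcases le_total k1 k2 with h | h
        · rw [show a = k1 by omega, show b = k2 by omega]
          exact h12
        · rw [show a = k2 by omega, show b = k1 by omega, wdist_symm S hSsym]
          exact h12
      -- S-distance between the block points
      have hS1 : wdist S (p 0 * (t.take u).prod) (p 0 * (t.take v).prod) ≤
          2 * M + 6 * D := by
        have t2 := wdist_triangle' S hSsym hSgen (p 0 * (t.take u).prod) (τ b)
          (p 0 * (t.take v).prod)
        have t3 := wdist_triangle' S hSsym hSgen (p 0 * (t.take u).prod) (τ a) (τ b)
        have e1 : wdist S (p 0 * (t.take u).prod) (τ a) ≤ M := by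
          rw [wdist_symm S hSsym]; exact hta
        omega
      -- undistortion : v - u ≤ c * (2M + 6D)
      have hvuR : ((v - u : ℕ) : ℝ) ≤ c * (2 * M + 6 * D) := by
        have e1 : wdist T (p 0 * (t.take u).prod) (p 0 * (t.take v).prod)
            = wordLength T ((p 0 * (t.take u).prod)⁻¹ * (p 0 * (t.take v).prod)) := rfl
        have e2 : wdist S (p 0 * (t.take u).prod) (p 0 * (t.take v).prod)
            = wordLength S ((p 0 * (t.take u).prod)⁻¹ * (p 0 * (t.take v).prod)) := rfl
        rw [← hTdist, e1]
        refine le_trans hundH ?_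
        have e3 : (wordLength S ((p 0 * (t.take u).prod)⁻¹ * (p 0 * (t.take v).prod)) : ℝ)
            ≤ 2 * M + 6 * D := by
          rw [← e2]
          exact_mod_cast hS1
        nlinarith
      -- arithmetic…
      have hdm_a := Nat.div_add_mod a M
      have hdm_b := Nat.div_add_mod b M
      have hmod_b : b % M < M := Nat.mod_lt _ (by omega)
      have hLMba : (LM : ℝ) = (b : ℝ) - a := by
        rw [hLMdef]
        push_cast [Nat.cast_sub hab]
        ring
      have hbR : (b : ℝ) = M * v + (b % M : ℕ) := by exact_mod_cast hdm_b.symm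
      have haR : (a : ℝ) = M * u + (a % M : ℕ) := by exact_mod_cast hdm_a.symm
      have hmodbR : ((b % M : ℕ) : ℝ) < M := by exact_mod_cast hmod_b
      have hmodaR : (0:ℝ) ≤ ((a % M : ℕ) : ℝ) := Nat.cast_nonneg _
      have hvuR' : ((v:ℝ) - u) = ((v - u : ℕ) : ℝ) := by
        rw [Nat.cast_sub huv]
      have hMv : (LM : ℝ) ≤ M * ((v:ℝ) - u) + M := by
        rw [hLMba, hbR, haR]
        nlinarith
      rw [hvuR'] at hMv
      calc (LM : ℝ) ≤ M * ((v - u : ℕ) : ℝ) + M := hMv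
        _ ≤ M * (c * (6 * D + 2 * M)) + M := by
            have : c * (2 * M + 6 * D) = c * (6 * D + 2 * M) := by ring
            nlinarith [hvuR, hM0R]
    have hL'bound : (L' : ℝ) ≤ K₁ * D + K₂ := by
      have h1 : (L' : ℕ) ≤ ℓ + 1 := by omega
      have h2 : (ℓ : ℝ) = (d1 : ℝ) + LM + d2 := by push_cast [hℓdef]; ring
      have h3 : (d1 : ℝ) ≤ D := by exact_mod_cast hk1d
      have h4 : (d2 : ℝ) ≤ D := by exact_mod_cast hd2D
      have h5 : (L' : ℝ) ≤ (ℓ : ℝ) + 1 := by exact_mod_cast h1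
      rw [hK₁def, hK₂def]
      nlinarith [hM0R, Nat.cast_nonneg (α := ℝ) D]
    -- apply the thin-path lemma
    have hppgeo : IsGeodesic S (fun k => p (j1 + k)) (j2 - j1) :=
      IsGeodesic.shift S hp (by omega) hj2n
    obtain ⟨k, hkL', hkd⟩ := thin_path S hSsym hSgen hδ hslim L' (le_max_right _ _)
      π (fun k _ => hπunit k) (fun k => p (j1 + k)) (j2 - j1) hppgeo
      (by rw [hπ0]; simp) (by rw [hπL']; show p (j1 + (j2 - j1)) = p j2; congr 1; omega)
      (i₀ - j1) (by omega)
    have hpp : p (j1 + (i₀ - j1)) = p i₀ := by congr 1; omega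
    rw [show j1 + (i₀ - j1) = i₀ from by omega] at hkd
    exact hCprop D L' (le_max_right _ _) hL'bound (le_trans (hπlb k) hkd)
  -- conclusion for each point of the geodesic
  have hdiD : dτ i ≤ D := hdτle i hin
  obtain ⟨k, hkL, hke⟩ := hdτatt i
  obtain ⟨hkq, hkb⟩ := hτblock k hkL
  refine ⟨p 0 * (t.take (k / M)).prod, hσH (k / M), ?_⟩
  have htri := wdist_triangle' S hSsym hSgen (p i) (τ k) (p 0 * (t.take (k / M)).prod)
  have hfinal : wdist S (p i) (p 0 * (t.take (k / M)).prod) ≤ D + M := by omega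
  calc (wdist S (p i) (p 0 * (t.take (k / M)).prod) : ℝ) ≤ (D : ℝ) + M := by
        exact_mod_cast hfinal
    _ ≤ C + M := by linarith
end

section
/- In a δ-hyperbolic geodesic space, consider a geodesic polygon X₀X₁…Xₙ with n ≥ 2. Then there exist points X̄ᵢ on the segment [Xᵢ, Xᵢ₊₁] for i = 1, …, n−1 such that, setting X̄₀ = X₀ and X̄ₙ = Xₙ, the Gromov products satisfy (X̄ᵢ₋₁ | X̄ᵢ₊₁)_{X̄ᵢ} ≤ δ and d(X̄ᵢ, [X̄ᵢ₋₁, Xᵢ]) ≤ δ for all 1 ≤ i ≤ n−1. -/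
variable {X : Type*} [MetricSpace X]

/-- `f` is a geodesic from `a` to `b`, parameterized by arclength on `[0, dist a b]`. -/
def IsGeodesicFromTo (f : ℝ → X) (a b : X) : Prop :=
  f 0 = a ∧ f (dist a b) = b ∧
  ∀ s ∈ Set.Icc 0 (dist a b), ∀ t ∈ Set.Icc 0 (dist a b), dist (f s) (f t) = |s - t|

/-- The Gromov product `(x|y)_w`. -/
noncomputable def gprod (x y w : X) : ℝ := (dist x w + dist y w - dist x y) / 2

/-- All geodesic triangles of `X` are `δ`-thin: points on two sides equidistant from a
common vertex (within the Gromov product of the other two vertices) are `δ`-close. -/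
def ThinTriangles (X : Type*) [MetricSpace X] (δ : ℝ) : Prop :=
  ∀ (a b c : X) (f g : ℝ → X), IsGeodesicFromTo f a b → IsGeodesicFromTo g a c →
    ∀ t : ℝ, 0 ≤ t → t ≤ gprod b c a → dist (f t) (g t) ≤ δ

lemma gprod_nonneg (x y w : X) : 0 ≤ gprod x y w := by
  have h := dist_triangle x w y
  rw [dist_comm w y] at h
  simp only [gprod]
  linarith

lemma gprod_le_left (x y w : X) : gprod x y w ≤ dist x w := by
  have h := dist_triangle y x w
  rw [dist_comm y x] at h
  simp only [gprod]
  linarith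

lemma gprod_le_right (x y w : X) : gprod x y w ≤ dist y w := by
  have h := dist_triangle x y w
  simp only [gprod]
  linarith

lemma reverse_geodesic (geo : X → X → ℝ → X)
    (hgeo : ∀ a b : X, IsGeodesicFromTo (geo a b) a b) (a b : X) :
    IsGeodesicFromTo (fun s => geo b a (dist b a - s)) a b := by
  obtain ⟨h0, h1, h2⟩ := hgeo b a
  refine ⟨by simpa using h1, ?_, ?_⟩
  · show geo b a (dist b a - dist a b) = b
    rw [dist_comm a b, sub_self, h0]
  · intro s hs t ht
    rw [dist_comm a b] at hs ht
    show dist (geo b a (dist b a - s)) (geo b a (dist b a - t)) = |s - t|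
    rw [h2 _ ⟨by linarith [hs.2], by linarith [hs.1]⟩
         _ ⟨by linarith [ht.2], by linarith [ht.1]⟩,
      show dist b a - s - (dist b a - t) = t - s by ring, abs_sub_comm]

lemma thin_key {δ : ℝ} (hthin : ThinTriangles X δ) (geo : X → X → ℝ → X)
    (hgeo : ∀ a b : X, IsGeodesicFromTo (geo a b) a b) (a b c : X)
    {t : ℝ} (ht0 : 0 ≤ t) (ht1 : t ≤ gprod b c a) :
    dist (geo b a (dist b a - t)) (geo a c t) ≤ δ :=
  hthin a b c _ _ (reverse_geodesic geo hgeo a b) (hgeo a c) t ht0 ht1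

lemma thin_key2 {δ : ℝ} (hthin : ThinTriangles X δ) (geo : X → X → ℝ → X)
    (hgeo : ∀ a b : X, IsGeodesicFromTo (geo a b) a b) (a c w : X) {t t' : ℝ}
    (ht : t ∈ Set.Icc 0 (dist a c)) (ht'0 : 0 ≤ t')
    (ht'1 : t' ≤ gprod (geo a c t) w c) :
    dist (geo a c (dist a c - t')) (geo c w t') ≤ δ := by
  have hdcm : dist c (geo a c t) = dist a c - t := by
    have h := (hgeo a c).2.2 (dist a c) ⟨dist_nonneg, le_refl _⟩ t ht
    rw [(hgeo a c).2.1] at h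
    rw [h, abs_of_nonneg (by linarith [ht.2])]
  have hf : IsGeodesicFromTo (fun s => geo a c (dist a c - s)) c (geo a c t) := by
    refine ⟨?_, ?_, ?_⟩
    · show geo a c (dist a c - 0) = c
      rw [sub_zero, (hgeo a c).2.1]
    · show geo a c (dist a c - dist c (geo a c t)) = geo a c t
      rw [hdcm, sub_sub_cancel]
    · intro s hs u hu
      rw [hdcm] at hs hu
      show dist (geo a c (dist a c - s)) (geo a c (dist a c - u)) = |s - u|
      rw [(hgeo a c).2.2 _ ⟨by linarith [hs.2, ht.1], by linarith [hs.1]⟩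
           _ ⟨by linarith [hu.2, ht.1], by linarith [hu.1]⟩,
        show dist a c - s - (dist a c - u) = u - s by ring, abs_sub_comm]
  exact hthin c (geo a c t) w _ _ hf (hgeo c w) t' ht'0 ht'1

/-- Lemma 3.1: in a `δ`-hyperbolic space, for a geodesic polygon `X₀X₁…Xₙ` (`n ≥ 2`)
there are points `X̄ᵢ ∈ [Xᵢ, Xᵢ₊₁]`, `i = 1,…,n-1` (with `X̄₀ = X₀`, `X̄ₙ = Xₙ`), such
that `(X̄ᵢ₋₁|X̄ᵢ₊₁)_{X̄ᵢ} ≤ δ` and `d(X̄ᵢ, [X̄ᵢ₋₁, Xᵢ]) ≤ δ`. -/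
theorem polygon_transition_points (δ : ℝ) (hδ : 0 ≤ δ) (hthin : ThinTriangles X δ)
    (geo : X → X → ℝ → X) (hgeo : ∀ a b : X, IsGeodesicFromTo (geo a b) a b)
    (n : ℕ) (hn : 2 ≤ n) (V : ℕ → X) :
    ∃ B : ℕ → X, B 0 = V 0 ∧ B n = V n ∧
      (∀ i : ℕ, 1 ≤ i → i ≤ n - 1 →
        (∃ t ∈ Set.Icc 0 (dist (V i) (V (i + 1))), B i = geo (V i) (V (i + 1)) t) ∧
        gprod (B (i - 1)) (B (i + 1)) (B i) ≤ δ ∧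
        ∃ u ∈ Set.Icc 0 (dist (B (i - 1)) (V i)),
          dist (B i) (geo (B (i - 1)) (V i) u) ≤ δ) := by
  set B : ℕ → X := fun i => Nat.rec (V 0) (fun k Bk =>
    if k + 1 < n then geo (V (k+1)) (V (k+2)) (gprod Bk (V (k+2)) (V (k+1)))
    else V (k+1)) i with hB
  have hBsucc : ∀ k : ℕ, B (k+1) =
      if k + 1 < n then geo (V (k+1)) (V (k+2)) (gprod (B k) (V (k+2)) (V (k+1)))
      else V (k+1) := fun k => rfl
  have hBn : B n = V n := by
    obtain ⟨m, rfl⟩ : ∃ m, n = m + 1 := ⟨n - 1, by omega⟩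
    rw [hBsucc]
    simp
  refine ⟨B, rfl, hBn, ?_⟩
  intro i hi1 hi2
  obtain ⟨k, rfl⟩ : ∃ k, i = k + 1 := ⟨i - 1, by omega⟩
  have hin : k + 1 < n := by omega
  simp only [Nat.add_sub_cancel]
  set p := B k with hp
  set a := V (k+1) with ha
  set c := V (k+2) with hc
  have hm : B (k+1) = geo a c (gprod p c a) := by rw [hBsucc k, if_pos hin]
  set t := gprod p c a with htdef
  have h2t : t = (dist p a + dist c a - dist p c) / 2 := htdef
  have ht0 : 0 ≤ t := gprod_nonneg _ _ _
  have htpa : t ≤ dist p a := gprod_le_left _ _ _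
  have htac : t ≤ dist a c := by
    have h := gprod_le_right p c a
    rwa [dist_comm c a] at h
  -- distances along the geodesic [a, c]
  have hdam : dist a (geo a c t) = t := by
    have h := (hgeo a c).2.2 0 ⟨le_refl _, dist_nonneg⟩ t ⟨ht0, htac⟩
    rw [(hgeo a c).1] at h
    rw [h, abs_of_nonpos (by linarith), neg_sub, sub_zero]
  have hdmc : dist (geo a c t) c = dist a c - t := by
    have h := (hgeo a c).2.2 t ⟨ht0, htac⟩ (dist a c) ⟨dist_nonneg, le_refl _⟩
    rw [(hgeo a c).2.1] at h
    rw [h, abs_of_nonpos (by linarith), neg_sub]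
  -- dist p (B (k+1)) ≤ dist p a - t + δ
  have h1 : dist p (geo a c t) ≤ dist p a - t + δ := by
    have htri := dist_triangle p (geo p a (dist p a - t)) (geo a c t)
    have hfirst : dist p (geo p a (dist p a - t)) = dist p a - t := by
      have h := (hgeo p a).2.2 0 ⟨le_refl _, dist_nonneg⟩ (dist p a - t)
        ⟨by linarith, by linarith⟩
      rw [(hgeo p a).1] at h
      rw [h, abs_of_nonpos (by linarith), neg_sub, sub_zero]
    have hsecond : dist (geo p a (dist p a - t)) (geo a c t) ≤ δ :=
      thin_key hthin geo hgeo a p c ht0 le_rfl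
    linarith
  refine ⟨⟨t, ⟨ht0, htac⟩, hm⟩, ?_, ?_⟩
  · -- the Gromov product condition
    by_cases h : k + 2 < n
    · -- B (k+2) lies on [c, V (k+3)]
      set w := V (k+3) with hw
      have hx : B (k+2) = geo c w (gprod (B (k+1)) w c) := by
        rw [hBsucc (k+1), if_pos h]
      rw [hm] at hx
      set t' := gprod (geo a c t) w c with ht'def
      have ht'0 : 0 ≤ t' := gprod_nonneg _ _ _
      have ht'mc : t' ≤ dist a c - t := by
        have h' := gprod_le_left (geo a c t) w c
        rwa [hdmc] at h'
      have ht'cw : t' ≤ dist c w := by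
        have h' := gprod_le_right (geo a c t) w c
        rwa [dist_comm w c] at h'
      have hcx : dist c (B (k+2)) = t' := by
        rw [hx]
        have h' := (hgeo c w).2.2 0 ⟨le_refl _, dist_nonneg⟩ t' ⟨ht'0, ht'cw⟩
        rw [(hgeo c w).1] at h'
        rw [h', abs_of_nonpos (by linarith), neg_sub, sub_zero]
      have hxm : dist (B (k+2)) (geo a c t) ≤ δ + (dist a c - t - t') := by
        have htri := dist_triangle (B (k+2)) (geo a c (dist a c - t')) (geo a c t)
        have hfirst : dist (B (k+2)) (geo a c (dist a c - t')) ≤ δ := by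
          rw [hx, dist_comm]
          exact thin_key2 hthin geo hgeo a c w ⟨ht0, htac⟩ ht'0 le_rfl
        have hsecond : dist (geo a c (dist a c - t')) (geo a c t) = dist a c - t - t' := by
          rw [(hgeo a c).2.2 _ ⟨by linarith, by linarith⟩ _ ⟨ht0, htac⟩,
            abs_of_nonneg (by linarith)]
          ring
        linarith
      have hpx : dist p c ≤ dist p (B (k+2)) + t' := by
        have h' := dist_triangle p (B (k+2)) c
        rw [dist_comm (B (k+2)) c] at h'
        linarith [hcx ▸ h']
      have hgoal : gprod p (B (k+2)) (B (k+1)) =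
          (dist p (B (k+1)) + dist (B (k+2)) (B (k+1)) - dist p (B (k+2))) / 2 := rfl
      rw [hgoal, hm]
      rw [dist_comm c a] at h2t
      linarith
    · -- k + 2 = n, so B (k+2) = c
      have hxc : B (k+2) = c := by rw [hBsucc (k+1), if_neg h]
      have hgoal : gprod p (B (k+2)) (B (k+1)) =
          (dist p (B (k+1)) + dist (B (k+2)) (B (k+1)) - dist p (B (k+2))) / 2 := rfl
      rw [hgoal, hm, hxc, dist_comm c (geo a c t), hdmc]
      rw [dist_comm c a] at h2t
      linarith
  · -- the distance-to-previous-side condition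
    refine ⟨dist p a - t, ⟨by linarith, by linarith⟩, ?_⟩
    rw [hm, dist_comm]
    exact thin_key hthin geo hgeo a p c ht0 le_rfl
end

section
/- In the free group F(x,y), for an increasing sequence of primes q₁ < q₂ < …, set dᵢ = q₁⋯qᵢ and cᵢ = dᵢ·qᵢ, and define P₁ = ⟨x^{d₁}⟩ and for i ≥ 2, Pᵢ = ⟨y⟩·⟨y x^{c₁} y⁻¹⟩·⟨y² x^{c₂} y⁻²⟩⋯⟨y^{i−1} x^{c_{i−1}} y^{−(i−1)}⟩·⟨y^i x^{d_i} y^{−i}⟩·⟨y⟩. Then for every k ≥ 1, the intersection ⋂_{i=1}^{k} Pᵢ equals ⟨x^{c₁}⟩ ∪ … ∪ ⟨x^{c_{k−1}}⟩ ∪ ⟨x^{d_k}⟩, and consequently ⋂_{i=1}^{∞} Pᵢ = ⋃_{i=1}^{∞} ⟨x^{cᵢ}⟩. -/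
open Pointwise

/-- The free group on two generators `x`, `y`. -/
abbrev F2 := FreeGroup Bool

/-- The generator `x`. -/
def xx : F2 := FreeGroup.of true

/-- The generator `y`. -/
def yy : F2 := FreeGroup.of false

/-- `dd q i = q₁⋯qᵢ` (0-based: the product of the first `i+1` terms). -/
def dd (q : ℕ → ℕ) (i : ℕ) : ℕ := ∏ j ∈ Finset.range (i + 1), q j

/-- `cc q i = dd q i * q i` (i.e. `q₁⋯q_{i-1}qᵢ²` in 1-based notation). -/
def cc (q : ℕ → ℕ) (i : ℕ) : ℕ := dd q i * q i

/-- The sets `Pᵢ` (0-based: `Pset q m` is the paper's `P_{m+1}`):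
`P₁ = ⟨x^{d₁}⟩` and, for `i ≥ 2`,
`Pᵢ = ⟨y⟩·⟨y x^{c₁} y⁻¹⟩⋯⟨y^{i-1} x^{c_{i-1}} y^{-(i-1)}⟩·⟨yⁱ x^{dᵢ} y^{-i}⟩·⟨y⟩`. -/
def Pset (q : ℕ → ℕ) : ℕ → Set F2
  | 0 => (Subgroup.zpowers (xx ^ dd q 0) : Set F2)
  | m + 1 =>
      (Subgroup.zpowers yy : Set F2) *
      (((List.range (m + 1)).map (fun j =>
          (Subgroup.zpowers (yy ^ (j + 1) * xx ^ cc q j * (yy ^ (j + 1))⁻¹) : Set F2))).prod) *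
      (Subgroup.zpowers (yy ^ (m + 2) * xx ^ dd q (m + 1) * (yy ^ (m + 2))⁻¹) : Set F2) *
      (Subgroup.zpowers yy : Set F2)

@[ext] structure WW : Type where
  f : ℤ → ℤ
  k : ℤ

namespace WW

instance : Mul WW := ⟨fun a b => ⟨fun t => a.f t + b.f (t - a.k), a.k + b.k⟩⟩
instance : One WW := ⟨⟨0, 0⟩⟩
instance : Inv WW := ⟨fun a => ⟨fun t => -(a.f (t + a.k)), -a.k⟩⟩

@[simp] lemma mul_f (a b : WW) : (a*b).f = fun t => a.f t + b.f (t - a.k) := rfl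
@[simp] lemma mul_k (a b : WW) : (a*b).k = a.k + b.k := rfl
@[simp] lemma one_f : (1:WW).f = fun _ => 0 := rfl
@[simp] lemma one_k : (1:WW).k = 0 := rfl
@[simp] lemma inv_f (a : WW) : a⁻¹.f = fun t => -(a.f (t + a.k)) := rfl
@[simp] lemma inv_k (a : WW) : a⁻¹.k = -a.k := rfl

instance : Group WW where
  mul_assoc a b c := by
    refine WW.ext (funext fun t => ?_) ?_ <;> simp
    · ring_nf
    · ring
  one_mul a := by refine WW.ext (funext fun t => ?_) ?_ <;> simp
  mul_one a := by refine WW.ext (funext fun t => ?_) ?_ <;> simp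
  inv_mul_cancel a := by refine WW.ext (funext fun t => ?_) ?_ <;> simp

end WW

namespace WW

def delta (s v : ℤ) : ℤ → ℤ := fun t => if t = s then v else 0

@[simp] lemma delta_self (s v : ℤ) : delta s v s = v := by simp [delta]
lemma delta_ne {s v t : ℤ} (h : t ≠ s) : delta s v t = 0 := by simp [delta, h]

lemma mk_zero_pow (g : ℤ → ℤ) (a : ℕ) : (⟨g, 0⟩ : WW) ^ a = ⟨fun t => (a:ℤ) * g t, 0⟩ := by
  induction a with
  | zero => refine WW.ext (funext fun t => ?_) ?_ <;> simp
  | succ a ih =>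
      rw [pow_succ, ih]
      refine WW.ext (funext fun t => ?_) ?_ <;> simp <;> ring

lemma mk_zero_zpow (g : ℤ → ℤ) (e : ℤ) : (⟨g, 0⟩ : WW) ^ e = ⟨fun t => e * g t, 0⟩ := by
  cases e with
  | ofNat a => rw [Int.ofNat_eq_coe, zpow_natCast, mk_zero_pow]
  | negSucc a =>
      rw [zpow_negSucc, mk_zero_pow]
      refine WW.ext (funext fun t => ?_) ?_ <;> simp
      rw [Int.negSucc_eq]; ring

lemma y_pow (a : ℕ) : (⟨fun _ => 0, 1⟩ : WW) ^ a = ⟨fun _ => 0, (a:ℤ)⟩ := by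
  induction a with
  | zero => refine WW.ext (funext fun t => ?_) ?_ <;> simp
  | succ a ih => rw [pow_succ, ih]; refine WW.ext (funext fun t => ?_) ?_ <;> simp

lemma y_zpow (a : ℤ) : (⟨fun _ => 0, 1⟩ : WW) ^ a = ⟨fun _ => 0, a⟩ := by
  cases a with
  | ofNat a => rw [Int.ofNat_eq_coe, zpow_natCast, y_pow]
  | negSucc a =>
      rw [zpow_negSucc, y_pow]
      refine WW.ext (funext fun t => ?_) ?_ <;> simp [Int.negSucc_eq]

def psi : F2 →* WW := FreeGroup.lift (fun b => if b then ⟨delta 0 1, 0⟩ else ⟨fun _ => 0, 1⟩)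

@[simp] lemma psi_x : psi xx = ⟨delta 0 1, 0⟩ := by simp [psi, xx]
@[simp] lemma psi_y : psi yy = ⟨fun _ => 0, 1⟩ := by simp [psi, yy]

lemma psi_xzpow (n : ℤ) : psi (xx ^ n) = ⟨delta 0 n, 0⟩ := by
  rw [map_zpow, psi_x, mk_zero_zpow]
  refine WW.ext (funext fun t => ?_) rfl
  simp [delta, mul_ite]

lemma xzpow_inj {a b : ℤ} (h : xx ^ a = xx ^ b) : a = b := by
  have := congrArg psi h
  rw [psi_xzpow, psi_xzpow] at this
  have h2 := congrArg (fun w => WW.f w 0) this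
  simpa using h2

lemma psi_conj_zpow (s C : ℕ) (e : ℤ) :
    psi ((yy ^ s * xx ^ C * (yy ^ s)⁻¹) ^ e) = ⟨delta s ((C:ℤ) * e), 0⟩ := by
  rw [map_zpow, map_mul, map_mul, map_inv, map_pow, map_pow, psi_x, psi_y, y_pow,
    mk_zero_pow]
  have : ((⟨fun _ => 0, (s:ℤ)⟩ : WW) * ⟨fun t => (C:ℤ) * delta 0 1 t, 0⟩ *
      (⟨fun _ => 0, (s:ℤ)⟩ : WW)⁻¹) = ⟨delta s (C:ℤ), 0⟩ := by
    refine WW.ext (funext fun t => ?_) ?_ <;> simp [delta]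
    · split_ifs with h1 h2 h2 <;> omega
  rw [this, mk_zero_zpow]
  refine WW.ext (funext fun t => ?_) rfl
  simp [delta]; split_ifs <;> ring

lemma prod_mk_zero (G : ℕ → ℤ → ℤ) (n : ℕ) :
    ((List.range n).map (fun j => (⟨G j, 0⟩ : WW))).prod =
      ⟨fun t => ∑ j ∈ Finset.range n, G j t, 0⟩ := by
  induction n with
  | zero => refine WW.ext (funext fun t => ?_) ?_ <;> simp
  | succ n ih =>
      rw [List.range_succ, List.map_append, List.prod_append, ih]
      refine WW.ext (funext fun t => ?_) ?_ <;>
        simp [Finset.sum_range_succ]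

end WW

section ListProd
open Pointwise

lemma mem_listProd {G : Type*} [Group G] (F : ℕ → Set G) (n : ℕ) (g : G) :
    g ∈ ((List.range n).map F).prod ↔
      ∃ c : ℕ → G, (∀ j < n, c j ∈ F j) ∧ g = ((List.range n).map c).prod := by
  induction n generalizing g with
  | zero =>
      simp only [List.range_zero, List.map_nil, List.prod_nil, Set.mem_one]
      constructor
      · rintro rfl; exact ⟨fun _ => 1, by simp, by simp⟩
      · rintro ⟨c, -, rfl⟩; simp
  | succ n ih =>
      rw [List.range_succ, List.map_append, List.prod_append]
      simp only [List.map_cons, List.map_nil, List.prod_cons, List.prod_nil, mul_one]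
      constructor
      · rintro hg
        rw [Set.mem_mul] at hg
        obtain ⟨p, hp, v, hv, rfl⟩ := hg
        obtain ⟨c, hc, rfl⟩ := (ih p).mp hp
        refine ⟨Function.update c n v, fun j hj => ?_, ?_⟩
        · rcases Nat.lt_succ_iff_lt_or_eq.mp hj with h | rfl
          · rw [Function.update_of_ne (Nat.ne_of_lt h)]; exact hc j h
          · rw [Function.update_self]; exact hv
        · rw [List.map_append, List.prod_append]
          simp only [List.map_cons, List.map_nil, List.prod_cons, List.prod_nil, mul_one,
            Function.update_self]
          congr 1
          congr 1
          exact List.map_congr_left fun j hj =>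
            (Function.update_of_ne (Nat.ne_of_lt (List.mem_range.mp hj)) _ _).symm
      · rintro ⟨c, hc, rfl⟩
        rw [List.map_append, List.prod_append]
        simp only [List.map_cons, List.map_nil, List.prod_cons, List.prod_nil, mul_one]
        exact Set.mul_mem_mul ((ih _).mpr ⟨c, fun j hj => hc j (hj.trans (Nat.lt_succ_self n)), rfl⟩)
          (hc n (Nat.lt_succ_self n))

lemma listProd_single {M : Type*} [Monoid M] (c : ℕ → M) {j n : ℕ} (hj : j < n)
    (h1 : ∀ i, i ≠ j → c i = 1) : ((List.range n).map c).prod = c j := by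
  induction n with
  | zero => omega
  | succ n ih =>
      rw [List.range_succ, List.map_append, List.prod_append]
      simp only [List.map_cons, List.map_nil, List.prod_cons, List.prod_nil, mul_one]
      rcases Nat.lt_succ_iff_lt_or_eq.mp hj with h | rfl
      · rw [ih h, h1 n (by omega), mul_one]
      · rw [List.prod_eq_one, one_mul]
        intro x hx
        obtain ⟨i, hi, rfl⟩ := List.mem_map.mp hx
        exact h1 i (Nat.ne_of_lt (List.mem_range.mp hi))

end ListProd

open Pointwise WW

lemma xpow_zpow_eq (d : ℕ) (e : ℤ) : ((xx ^ d) ^ e) = xx ^ ((d:ℤ) * e) := by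
  rw [← zpow_natCast xx d, ← zpow_mul]

lemma xpow_mem_zpowers (d : ℕ) (n : ℤ) :
    xx ^ n ∈ Subgroup.zpowers (xx ^ d) ↔ (d:ℤ) ∣ n := by
  constructor
  · intro h
    obtain ⟨e, he⟩ := Subgroup.mem_zpowers_iff.mp h
    rw [xpow_zpow_eq] at he
    exact ⟨e, (xzpow_inj he).symm⟩
  · rintro ⟨e, rfl⟩
    exact Subgroup.mem_zpowers_iff.mpr ⟨e, xpow_zpow_eq d e⟩

lemma mem_zpowers_xpow_iff (d : ℕ) (g : F2) :
    g ∈ (Subgroup.zpowers (xx ^ d) : Set F2) ↔ ∃ n : ℤ, (d:ℤ) ∣ n ∧ g = xx ^ n := by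
  constructor
  · intro h
    obtain ⟨e, he⟩ := Subgroup.mem_zpowers_iff.mp h
    exact ⟨(d:ℤ) * e, ⟨e, rfl⟩, by rw [← xpow_zpow_eq, he]⟩
  · rintro ⟨n, hd, rfl⟩
    exact (xpow_mem_zpowers d n).mpr hd

lemma mem_Pset_succ_iff (q : ℕ → ℕ) (m : ℕ) (n : ℤ) :
    xx ^ n ∈ Pset q (m+1) ↔
      (∃ j ≤ m, ((cc q j : ℤ)) ∣ n) ∨ ((dd q (m+1) : ℤ)) ∣ n := by
  constructor
  · intro h
    rw [Pset, Set.mem_mul] at h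
    obtain ⟨uvp, huvp, w, hw, heq⟩ := h
    rw [Set.mem_mul] at huvp
    obtain ⟨up, hup, v, hv, rfl⟩ := huvp
    rw [Set.mem_mul] at hup
    obtain ⟨u, hu, p, hp, rfl⟩ := hup
    obtain ⟨a, rfl⟩ := Subgroup.mem_zpowers_iff.mp hu
    obtain ⟨b, rfl⟩ := Subgroup.mem_zpowers_iff.mp hw
    obtain ⟨e', hv'⟩ := Subgroup.mem_zpowers_iff.mp hv
    obtain ⟨cf, hcf, rfl⟩ := (mem_listProd _ _ _).mp hp
    -- choose exponents for the list elements
    have hex : ∀ j, ∃ e : ℤ, j < m + 1 →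
        (yy ^ (j + 1) * xx ^ cc q j * (yy ^ (j + 1))⁻¹) ^ e = cf j := by
      intro j
      by_cases hj : j < m + 1
      · obtain ⟨e, he⟩ := Subgroup.mem_zpowers_iff.mp (hcf j hj)
        exact ⟨e, fun _ => he⟩
      · exact ⟨0, fun h => absurd h hj⟩
    choose ee hee using hex
    -- apply psi
    have hpsi := congrArg psi heq
    rw [psi_xzpow, map_mul, map_mul, map_mul, map_zpow, map_zpow, psi_y, y_zpow, y_zpow,
      ← hv', psi_conj_zpow, map_list_prod, List.map_map] at hpsi
    rw [List.map_congr_left (l := List.range (m+1))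
        (f := psi ∘ cf)
        (g := fun j => (⟨delta ((j:ℤ)+1) ((cc q j : ℤ) * ee j), 0⟩ : WW))
        (fun j hj => by
          rw [List.mem_range] at hj
          simp only [Function.comp_apply, ← hee j hj, psi_conj_zpow]
          norm_num)] at hpsi
    rw [prod_mk_zero] at hpsi
    -- extract the f-component at 0
    have hf := congrArg (fun w => WW.f w 0) hpsi
    simp only [mul_f, mul_k, zero_sub, zero_add, add_zero] at hf
    -- hf : delta 0 n 0 =  ∑ + delta ...
    have hn : n = (∑ j ∈ Finset.range (m+1), delta ((j:ℤ)+1) ((cc q j : ℤ) * ee j) (-a))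
        + delta ((m:ℤ)+2) ((dd q (m+1) : ℤ) * e') (-a) := by
      simpa [delta] using hf.symm
    by_cases hA : ∃ j ∈ Finset.range (m+1), -a = (j:ℤ) + 1
    · obtain ⟨j, hjm, hja⟩ := hA
      left
      refine ⟨j, Nat.lt_succ_iff.mp (Finset.mem_range.mp hjm), ⟨ee j, ?_⟩⟩
      rw [hn, Finset.sum_eq_single_of_mem j hjm
        (fun i _ hij => delta_ne (by rw [hja]; omega)),
        hja, delta_self, delta_ne (by
          have := Finset.mem_range.mp hjm
          omega), add_zero]
    · push_neg at hA
      right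
      have hS : (∑ j ∈ Finset.range (m+1), delta ((j:ℤ)+1) ((cc q j : ℤ) * ee j) (-a)) = 0 :=
        Finset.sum_eq_zero fun j hj => delta_ne (hA j hj)
      by_cases hB : -a = (m:ℤ) + 2
      · exact ⟨e', by rw [hn, hS, zero_add, hB, delta_self]⟩
      · rw [hn, hS, zero_add, delta_ne hB]
        exact dvd_zero _
  · rintro (⟨j, hjm, e, rfl⟩ | ⟨e, rfl⟩)
    · -- xx ^ (cc q j * e) ∈ Pset
      rw [Pset]
      have key : xx ^ ((cc q j : ℤ) * e) =
          yy ^ (-((j:ℤ)+1)) *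
          ((yy ^ (j + 1) * xx ^ cc q j * (yy ^ (j + 1))⁻¹) ^ e) *
          1 * yy ^ ((j:ℤ)+1) := by
        rw [conj_zpow, xpow_zpow_eq, mul_one]
        have : ((j:ℤ) + 1) = ((j+1 : ℕ) : ℤ) := by push_cast; ring
        rw [this, ← zpow_natCast yy (j+1)]
        group
      rw [key]
      refine Set.mul_mem_mul (Set.mul_mem_mul (Set.mul_mem_mul ?_ ?_) ?_) ?_
      · exact Subgroup.mem_zpowers_iff.mpr ⟨-((j:ℤ)+1), rfl⟩
      · refine (mem_listProd _ _ _).mpr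
          ⟨fun i => if i = j then (yy ^ (j + 1) * xx ^ cc q j * (yy ^ (j + 1))⁻¹) ^ e else 1,
            fun i hi => ?_, ?_⟩
        · by_cases hij : i = j
          · subst hij; simp only [if_pos rfl]
            exact Subgroup.zpow_mem _ (Subgroup.mem_zpowers _) e
          · simp only [if_neg hij]; exact Subgroup.one_mem _
        · rw [listProd_single _ (Nat.lt_succ_of_le hjm) (fun i hij => if_neg hij), if_pos rfl]
      · exact Subgroup.one_mem _
      · exact Subgroup.mem_zpowers_iff.mpr ⟨(j:ℤ)+1, rfl⟩
    · rw [Pset]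
      have key : xx ^ ((dd q (m+1) : ℤ) * e) =
          yy ^ (-((m:ℤ)+2)) *
          1 *
          ((yy ^ (m + 2) * xx ^ dd q (m+1) * (yy ^ (m + 2))⁻¹) ^ e) * yy ^ ((m:ℤ)+2) := by
        rw [conj_zpow, xpow_zpow_eq, mul_one]
        have : ((m:ℤ) + 2) = ((m+2 : ℕ) : ℤ) := by push_cast; ring
        rw [this, ← zpow_natCast yy (m+2)]
        group
      rw [key]
      refine Set.mul_mem_mul (Set.mul_mem_mul (Set.mul_mem_mul ?_ ?_) ?_) ?_
      · exact Subgroup.mem_zpowers_iff.mpr ⟨-((m:ℤ)+2), rfl⟩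
      · refine (mem_listProd _ _ _).mpr ⟨fun _ => 1, fun i hi => Subgroup.one_mem _, ?_⟩
        rw [List.prod_eq_one]
        intro x hx
        obtain ⟨i, -, rfl⟩ := List.mem_map.mp hx
        rfl
      · exact Subgroup.zpow_mem _ (Subgroup.mem_zpowers _) e
      · exact Subgroup.mem_zpowers_iff.mpr ⟨(m:ℤ)+2, rfl⟩

lemma dd_dvd_dd (q : ℕ → ℕ) {a b : ℕ} (h : a ≤ b) : dd q a ∣ dd q b :=
  Finset.prod_dvd_prod_of_subset _ _ _ (Finset.range_subset_range.mpr (by omega))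

lemma dd_dvd_cc (q : ℕ → ℕ) (j : ℕ) : dd q j ∣ cc q j := dvd_mul_right _ _

lemma dd_dvd_cc' (q : ℕ → ℕ) {a j : ℕ} (h : a ≤ j) : dd q a ∣ cc q j :=
  (dd_dvd_dd q h).trans (dd_dvd_cc q j)

lemma two_pow_le_dd {q : ℕ → ℕ} (hq : ∀ i, (q i).Prime) (k : ℕ) : 2 ^ (k+1) ≤ dd q k := by
  have : (2:ℕ) ^ (k+1) = ∏ _j ∈ Finset.range (k+1), 2 := by
    rw [Finset.prod_const, Finset.card_range]
  rw [this, dd]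
  exact Finset.prod_le_prod' (fun i _ => (hq i).two_le)

/-- For every `k ≥ 1`, `⋂_{i=1}^{k} Pᵢ = ⟨x^{c₁}⟩ ∪ … ∪ ⟨x^{c_{k-1}}⟩ ∪ ⟨x^{d_k}⟩`,
and hence `⋂_{i=1}^{∞} Pᵢ = ⋃_{i=1}^{∞} ⟨x^{cᵢ}⟩` (all indices here 0-based). -/
theorem inter_Pset (q : ℕ → ℕ) (hq : ∀ i, (q i).Prime) (hmono : StrictMono q) :
    (∀ k : ℕ, (⋂ i ∈ Finset.range (k + 1), Pset q i) =
      (⋃ j ∈ Finset.range k, (Subgroup.zpowers (xx ^ cc q j) : Set F2)) ∪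
        (Subgroup.zpowers (xx ^ dd q k) : Set F2)) ∧
    (⋂ i : ℕ, Pset q i) = ⋃ i : ℕ, (Subgroup.zpowers (xx ^ cc q i) : Set F2) := by
  have hPset : ∀ (n : ℤ) (m : ℕ), ((∃ j ≤ m, ((cc q j : ℤ)) ∣ n) ∨ ((dd q (m+1) : ℤ)) ∣ n) →
      ∀ i, xx ^ n ∈ Pset q i → True := fun _ _ _ _ _ => trivial
  have part1 : ∀ k : ℕ, (⋂ i ∈ Finset.range (k + 1), Pset q i) =
      (⋃ j ∈ Finset.range k, (Subgroup.zpowers (xx ^ cc q j) : Set F2)) ∪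
        (Subgroup.zpowers (xx ^ dd q k) : Set F2) := by
    intro k
    ext g
    simp only [Set.mem_iInter, Set.mem_union, Set.mem_iUnion, Finset.mem_range]
    constructor
    · intro hg
      obtain ⟨n, hd0, rfl⟩ := (mem_zpowers_xpow_iff (dd q 0) g).mp (by
        have := hg 0 (by omega)
        rwa [Pset] at this)
      have main : (∃ j < k, ((cc q j : ℤ)) ∣ n) ∨ ((dd q k : ℤ)) ∣ n := by
        cases k with
        | zero => exact Or.inr hd0
        | succ k' =>
            rcases (mem_Pset_succ_iff q k' n).mp (by
                have := hg (k'+1) (by omega)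
                exact this) with ⟨j, hj, hdvd⟩ | hdvd
            · exact Or.inl ⟨j, Nat.lt_succ_of_le hj, hdvd⟩
            · exact Or.inr hdvd
      rcases main with ⟨j, hj, hdvd⟩ | hdvd
      · exact Or.inl ⟨j, hj, (xpow_mem_zpowers _ n).mpr hdvd⟩
      · exact Or.inr ((xpow_mem_zpowers _ n).mpr hdvd)
    · intro hg i hi
      rcases hg with ⟨j, hjk, hmem⟩ | hmem
      · obtain ⟨n, hdvd, rfl⟩ := (mem_zpowers_xpow_iff (cc q j) _).mp hmem
        cases i with
        | zero =>
            rw [Pset]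
            exact (xpow_mem_zpowers _ n).mpr
              (dvd_trans (Int.natCast_dvd_natCast.mpr (dd_dvd_cc' q (Nat.zero_le j))) hdvd)
        | succ m =>
            refine (mem_Pset_succ_iff q m n).mpr ?_
            by_cases hjm : j ≤ m
            · exact Or.inl ⟨j, hjm, hdvd⟩
            · exact Or.inr (dvd_trans
                (Int.natCast_dvd_natCast.mpr (dd_dvd_cc' q (by omega))) hdvd)
      · obtain ⟨n, hdvd, rfl⟩ := (mem_zpowers_xpow_iff (dd q k) _).mp hmem
        cases i with
        | zero =>
            rw [Pset]
            exact (xpow_mem_zpowers _ n).mpr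
              (dvd_trans (Int.natCast_dvd_natCast.mpr (dd_dvd_dd q (Nat.zero_le k))) hdvd)
        | succ m =>
            refine (mem_Pset_succ_iff q m n).mpr (Or.inr (dvd_trans
              (Int.natCast_dvd_natCast.mpr (dd_dvd_dd q (by omega))) hdvd))
  refine ⟨part1, ?_⟩
  ext g
  simp only [Set.mem_iInter, Set.mem_iUnion]
  constructor
  · intro hg
    obtain ⟨n, hd0, rfl⟩ := (mem_zpowers_xpow_iff (dd q 0) g).mp (by
      have := hg 0; rwa [Pset] at this)
    by_cases hc : ∃ i, ((cc q i : ℤ)) ∣ n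
    · obtain ⟨i, hi⟩ := hc
      exact ⟨i, (xpow_mem_zpowers _ n).mpr hi⟩
    · push_neg at hc
      exfalso
      have hdall : ∀ k, ((dd q k : ℤ)) ∣ n := by
        intro k
        cases k with
        | zero => exact hd0
        | succ m =>
            rcases (mem_Pset_succ_iff q m n).mp (hg (m+1)) with ⟨j, _, hdvd⟩ | hdvd
            · exact absurd hdvd (hc j)
            · exact hdvd
      have hn0 : n ≠ 0 := by
        intro h
        exact hc 0 (h ▸ dvd_zero _)
      set k := n.natAbs with hk
      have h1 : dd q k ∣ n.natAbs := by
        have := Int.natAbs_dvd_natAbs.mpr (hdall k)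
        simpa using this
      have h2 : dd q k ≤ n.natAbs := Nat.le_of_dvd (Int.natAbs_pos.mpr hn0) h1
      have h3 : n.natAbs < 2 ^ (k+1) := by
        calc n.natAbs = k := rfl
        _ < 2 ^ k := Nat.lt_two_pow_self
        _ < 2 ^ (k+1) := by
            exact Nat.pow_lt_pow_succ (by omega)
      have := two_pow_le_dd hq k
      omega
  · rintro ⟨i, hmem⟩ m
    obtain ⟨n, hdvd, rfl⟩ := (mem_zpowers_xpow_iff (cc q i) _).mp hmem
    cases m with
    | zero =>
        rw [Pset]
        exact (xpow_mem_zpowers _ n).mpr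
          (dvd_trans (Int.natCast_dvd_natCast.mpr (dd_dvd_cc' q (Nat.zero_le i))) hdvd)
    | succ m =>
        refine (mem_Pset_succ_iff q m n).mpr ?_
        by_cases him : i ≤ m
        · exact Or.inl ⟨i, him, hdvd⟩
        · exact Or.inr (dvd_trans
            (Int.natCast_dvd_natCast.mpr (dd_dvd_cc' q (by omega))) hdvd)
end

section
/- For two distinct increasing sequences of primes α = (q₁,q₂,…) and α' = (q₁',q₂',…), the subsets ⋃_{i=1}^{∞} ⟨x^{cᵢ}⟩ and ⋃_{j=1}^{∞} ⟨x^{c'_j}⟩ of the free group F(x,y) are distinct, where cᵢ = q₁⋯q_{i−1}qᵢ². -/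
open Pointwise

noncomputable def fmap : F2 →* Multiplicative ℤ :=
  FreeGroup.lift (fun b => Multiplicative.ofAdd (if b then (1:ℤ) else 0))

lemma fmap_xx_pow (n : ℕ) : fmap (xx ^ n) = Multiplicative.ofAdd (n : ℤ) := by
  rw [map_pow, fmap, xx, FreeGroup.lift_apply_of]
  simp [← ofAdd_nsmul]

lemma mem_zpowers_iff (c m : ℕ) (_hc : 0 < c) :
    (xx ^ m ∈ Subgroup.zpowers (xx ^ c)) ↔ c ∣ m := by
  rw [Subgroup.mem_zpowers_iff]
  constructor
  · rintro ⟨k, hk⟩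
    have := congrArg fmap hk
    rw [map_zpow, fmap_xx_pow, fmap_xx_pow] at this
    have h2 : (c : ℤ) * k = m := by
      have := congrArg Multiplicative.toAdd this
      simpa [← ofAdd_zsmul, smul_eq_mul, mul_comm] using this
    exact_mod_cast Dvd.intro k h2
  · rintro ⟨k, rfl⟩
    exact ⟨(k : ℤ), by rw [← zpow_natCast, ← zpow_natCast, ← zpow_mul]; norm_cast⟩

lemma prime_dvd_dd {p : ℕ} (hp : p.Prime) (q : ℕ → ℕ) (hq : ∀ i, (q i).Prime) (n : ℕ) :
    p ∣ dd q n ↔ ∃ i ≤ n, p = q i := by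
  rw [dd, hp.prime.dvd_finset_prod_iff]
  constructor
  · rintro ⟨i, hi, hd⟩
    exact ⟨i, Nat.lt_succ_iff.mp (Finset.mem_range.mp hi),
      (Nat.prime_dvd_prime_iff_eq hp (hq i)).mp hd⟩
  · rintro ⟨i, hi, rfl⟩
    exact ⟨i, Finset.mem_range.mpr (Nat.lt_succ_iff.mpr hi), dvd_rfl⟩

lemma key (q q' : ℕ → ℕ) (hq : ∀ i, (q i).Prime) (hq' : ∀ i, (q' i).Prime)
    (hmono : StrictMono q) (hmono' : StrictMono q') (l : ℕ) (hl : q l ≠ q' l)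
    (hagree : ∀ i < l, q i = q' i) (j : ℕ) : ¬ cc q' j ∣ cc q l := by
  intro hdvd
  rcases lt_or_ge j l with hj | hj
  · -- j < l : q j squared divides cc q' j but not cc q l
    have hqj := hq j
    have hsq : q j ^ 2 ∣ cc q' j := by
      have h1 : q j ∣ dd q' j := (prime_dvd_dd hqj q' hq' j).mpr ⟨j, le_refl j, hagree j hj⟩
      have : q j ^ 2 = q j * q j := sq (q j)
      rw [this, cc, ← hagree j hj]
      exact mul_dvd_mul h1 dvd_rfl
    have hsq2 : q j ^ 2 ∣ cc q l := hsq.trans hdvd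
    -- cc q l = q j * M with q j ∤ M
    have hjmem : j ∈ Finset.range (l + 1) := Finset.mem_range.mpr (by omega)
    have hsplit : dd q l = q j * ∏ i ∈ (Finset.range (l + 1)).erase j, q i :=
      (Finset.mul_prod_erase _ _ hjmem).symm
    set M := (∏ i ∈ (Finset.range (l + 1)).erase j, q i) * q l with hM
    have hccM : cc q l = q j * M := by rw [cc, hsplit]; ring
    have hnd : ¬ q j ∣ M := by
      intro hd
      rcases (hqj.prime.dvd_mul).mp hd with h | h
      · obtain ⟨i, hi, hdi⟩ := hqj.prime.dvd_finset_prod_iff _ |>.mp h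
        have : q j = q i := (Nat.prime_dvd_prime_iff_eq hqj (hq i)).mp hdi
        exact (Finset.ne_of_mem_erase hi) (hmono.injective this.symm)
      · have : q j = q l := (Nat.prime_dvd_prime_iff_eq hqj (hq l)).mp h
        exact absurd this (ne_of_lt (hmono hj))
    apply hnd
    have : q j * q j ∣ q j * M := by rw [← hccM, ← sq]; exact hsq2
    exact (mul_dvd_mul_iff_left hqj.pos.ne').mp this
  · -- l ≤ j : q' l divides cc q' j but not cc q l
    have hql' := hq' l
    have h1 : q' l ∣ cc q' j :=
      ((prime_dvd_dd hql' q' hq' j).mpr ⟨l, hj, rfl⟩).trans (Dvd.intro _ rfl)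
    have h2 : q' l ∣ cc q l := h1.trans hdvd
    rcases hql'.prime.dvd_mul.mp h2 with h | h
    · obtain ⟨i, hi, he⟩ := (prime_dvd_dd hql' q hq l).mp h
      rcases lt_or_eq_of_le hi with hi | hi
      · have : q' i < q' l := hmono' hi
        rw [← hagree i hi, ← he] at this
        exact lt_irrefl _ this
      · exact hl (by rw [hi] at he; exact he.symm)
    · exact hl ((Nat.prime_dvd_prime_iff_eq hql' (hq l)).mp h).symm

/-- Distinct increasing sequences of primes give distinct subsets
`⋃ᵢ ⟨x^{cᵢ}⟩` of the free group `F(x,y)`. -/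
theorem unions_distinct (q q' : ℕ → ℕ) (hq : ∀ i, (q i).Prime) (hq' : ∀ i, (q' i).Prime)
    (hmono : StrictMono q) (hmono' : StrictMono q') (hne : q ≠ q') :
    (⋃ i : ℕ, (Subgroup.zpowers (xx ^ cc q i) : Set F2)) ≠
      ⋃ j : ℕ, (Subgroup.zpowers (xx ^ cc q' j) : Set F2) := by
  have hex : ∃ l, q l ≠ q' l := Function.ne_iff.mp hne
  set l := Nat.find hex with hldef
  have hl : q l ≠ q' l := Nat.find_spec hex
  have hagree : ∀ i < l, q i = q' i := fun i hi => not_not.mp (Nat.find_min hex hi)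
  intro heq
  have hmem : xx ^ cc q l ∈ ⋃ i : ℕ, (Subgroup.zpowers (xx ^ cc q i) : Set F2) :=
    Set.mem_iUnion.mpr ⟨l, Subgroup.mem_zpowers _⟩
  rw [heq] at hmem
  obtain ⟨j, hj⟩ := Set.mem_iUnion.mp hmem
  have hpos : 0 < cc q' j :=
    Nat.mul_pos (Finset.prod_pos fun i _ => (hq' i).pos) (hq' j).pos
  exact key q q' hq hq' hmono hmono' l hl hagree j ((mem_zpowers_iff _ _ hpos).mp hj)
end
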